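/- arXiv:math/0402216 — 5 statements merged into one kernel-verified Lean document; each statement's English description precedes it below -/
import Mathlib

section
/- Let N be a positive integer and for an involution τ in the symmetric group Σ_N and σ ∈ Σ_N, define S(σ,τ) = (−1)^{m} where m is the number of unordered pairs {a,b} ⊆ {1,…,N} with a < b, τ(a) = b, and σ(a) > σ(b). Then for all σ, σ′ ∈ Σ_N and every involution τ, S(σ′σ, τ) = S(σ′, στσ⁻¹) · S(σ, τ). -/
open Equiv Finset

def Ssign {N : ℕ} (σ τ : Equiv.Perm (Fin N)) : ℤ :=
  (-1) ^ (Finset.univ.filter (fun p : Fin N × Fin N =>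
      p.1 < p.2 ∧ τ p.1 = p.2 ∧ σ p.2 < σ p.1)).card

lemma Ssign_eq_prod {N : ℕ} (σ τ : Equiv.Perm (Fin N)) :
    Ssign σ τ = ∏ p ∈ Finset.univ.filter
      (fun p : Fin N × Fin N => p.1 < p.2 ∧ τ p.1 = p.2),
      (if σ p.2 < σ p.1 then (-1 : ℤ) else 1) := by
  rw [Ssign, Finset.prod_filter, ← Finset.prod_const, Finset.prod_filter]
  apply Finset.prod_congr rfl
  intro p _
  split_ifs <;> simp_all

/-- The basic cocycle equation for the sign function S on involutions:
S(σ'σ, τ) = S(σ', στσ⁻¹) · S(σ, τ). -/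
theorem Ssign_cocycle {N : ℕ} (σ σ' τ : Equiv.Perm (Fin N)) (hτ : τ * τ = 1) :
    Ssign (σ' * σ) τ = Ssign σ' (σ * τ * σ⁻¹) * Ssign σ τ := by
  have hτ2 : ∀ a, τ (τ a) = a := fun a => by
    have := congrFun (congrArg (fun e : Equiv.Perm (Fin N) => (e : Fin N → Fin N)) hτ) a
    simpa using this
  rw [Ssign_eq_prod, Ssign_eq_prod, Ssign_eq_prod]
  set P := Finset.univ.filter (fun p : Fin N × Fin N => p.1 < p.2 ∧ τ p.1 = p.2) with hP
  set Q := Finset.univ.filter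
      (fun q : Fin N × Fin N => q.1 < q.2 ∧ (σ * τ * σ⁻¹) q.1 = q.2) with hQ
  have hmid : (∏ q ∈ Q, (if σ' q.2 < σ' q.1 then (-1 : ℤ) else 1)) =
      ∏ p ∈ P, (if σ p.1 < σ p.2 then (if σ' (σ p.2) < σ' (σ p.1) then (-1 : ℤ) else 1)
        else (if σ' (σ p.1) < σ' (σ p.2) then (-1 : ℤ) else 1)) := by
    apply Finset.prod_nbij'
      (i := fun q => if σ⁻¹ q.1 < σ⁻¹ q.2 then (σ⁻¹ q.1, σ⁻¹ q.2) else (σ⁻¹ q.2, σ⁻¹ q.1))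
      (j := fun p => if σ p.1 < σ p.2 then (σ p.1, σ p.2) else (σ p.2, σ p.1))
    · intro q hq
      simp only [hQ, Finset.mem_filter, Finset.mem_univ, true_and] at hq
      obtain ⟨hlt, heq⟩ := hq
      have hq1 : τ (σ⁻¹ q.1) = σ⁻¹ q.2 := by
        have := congrArg (fun x => σ⁻¹ x) heq
        simpa using this
      have hq2 : τ (σ⁻¹ q.2) = σ⁻¹ q.1 := by rw [← hq1, hτ2]
      have hne : σ⁻¹ q.1 ≠ σ⁻¹ q.2 := fun h => hlt.ne (by simpa using congrArg (fun x => σ x) h)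
      simp only [hP, Finset.mem_filter, Finset.mem_univ, true_and]
      rcases lt_or_gt_of_ne hne with h | h
      · simp [-Equiv.Perm.coe_inv, h, hq1]
      · simp [-Equiv.Perm.coe_inv, not_lt_of_gt h, h, hq2]
    · intro p hp
      simp only [hP, Finset.mem_filter, Finset.mem_univ, true_and] at hp
      obtain ⟨hlt, heq⟩ := hp
      have hne : σ p.1 ≠ σ p.2 := fun h => hlt.ne (σ.injective h)
      have h1 : (σ * τ * σ⁻¹) (σ p.1) = σ p.2 := by
        simp [Equiv.Perm.mul_apply, heq]
      have h2 : (σ * τ * σ⁻¹) (σ p.2) = σ p.1 := by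
        have : τ p.2 = p.1 := by rw [← heq, hτ2]
        simp [Equiv.Perm.mul_apply, this]
      simp only [hQ, Finset.mem_filter, Finset.mem_univ, true_and]
      rcases lt_or_gt_of_ne hne with h | h
      · simp [h, h1]
      · simp [not_lt_of_gt h, h, h2]
    · intro q hq
      simp only [hQ, Finset.mem_filter, Finset.mem_univ, true_and] at hq
      have hne : σ⁻¹ q.1 ≠ σ⁻¹ q.2 := fun h => hq.1.ne (by simpa using congrArg (fun x => σ x) h)
      rcases lt_or_gt_of_ne hne with h | h
      · simp [-Equiv.Perm.coe_inv, show ∀ x, σ (σ⁻¹ x) = x from σ.apply_symm_apply, h, hq.1]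
      · simp [-Equiv.Perm.coe_inv, show ∀ x, σ (σ⁻¹ x) = x from σ.apply_symm_apply, not_lt_of_gt h, h, not_lt_of_gt hq.1]
    · intro p hp
      simp only [hP, Finset.mem_filter, Finset.mem_univ, true_and] at hp
      have hne : σ p.1 ≠ σ p.2 := fun h => hp.1.ne (σ.injective h)
      rcases lt_or_gt_of_ne hne with h | h
      · simp [h, hp.1]
      · simp [not_lt_of_gt h, h, not_lt_of_gt hp.1]
    · intro q hq
      simp only [hQ, Finset.mem_filter, Finset.mem_univ, true_and] at hq
      have hne : σ⁻¹ q.1 ≠ σ⁻¹ q.2 := fun h => hq.1.ne (by simpa using congrArg (fun x => σ x) h)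
      rcases lt_or_gt_of_ne hne with h | h
      · simp [-Equiv.Perm.coe_inv, show ∀ x, σ (σ⁻¹ x) = x from σ.apply_symm_apply, h, hq.1]
      · simp [-Equiv.Perm.coe_inv, show ∀ x, σ (σ⁻¹ x) = x from σ.apply_symm_apply, not_lt_of_gt h, h, not_lt_of_gt hq.1]
  rw [hmid, ← Finset.prod_mul_distrib]
  apply Finset.prod_congr rfl
  intro p hp
  simp only [hP, Finset.mem_filter, Finset.mem_univ, true_and] at hp
  have hne : σ p.1 ≠ σ p.2 := fun h => hp.1.ne (σ.injective h)
  have hne' : σ' (σ p.1) ≠ σ' (σ p.2) := fun h => hne (σ'.injective h)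
  simp only [Equiv.Perm.mul_apply]
  rcases lt_or_gt_of_ne hne with h | h
  · simp [h, not_lt_of_gt h]
    exact if_congr Iff.rfl rfl rfl
  · rcases lt_or_gt_of_ne hne' with h' | h'
    · simp [not_lt_of_gt h, h, h', not_lt_of_gt h']
    · simp [not_lt_of_gt h, h, h', not_lt_of_gt h']
end

section
/- Let τ, κ be involutions in Σ_N such that there is no proper nonempty subset H of {1,…,N} with both τ(H) = H and κ(H) = H, and suppose τ and κ move the same number of points (equivalently, they are products of the same number j of disjoint transpositions). Then there exists an involution λ ∈ Σ_N with λτλ⁻¹ = κ and λκλ⁻¹ = τ. -/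
open Equiv Finset

/-- H is invariant under a permutation π : π maps H onto itself. -/
def InvSet {N : ℕ} (π : Equiv.Perm (Fin N)) (H : Finset (Fin N)) : Prop :=
  ∀ a ∈ H, π a ∈ H

/-- No proper nonempty subset of {1,…,N} is invariant under both τ and κ. -/
def NoCommonInvariant {N : ℕ} (τ κ : Equiv.Perm (Fin N)) : Prop :=
  ∀ H : Finset (Fin N), H.Nonempty → H ≠ Finset.univ → ¬ (InvSet τ H ∧ InvSet κ H)

/-- An involution's cycle type consists only of 2s. -/
lemma invol_cycleType {N : ℕ} (π : Equiv.Perm (Fin N)) (hπ : π * π = 1) :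
    π.cycleType = Multiset.replicate (Multiset.card π.cycleType) 2 := by
  rw [Multiset.eq_replicate_card]
  intro c hc
  have h1 : c ∣ orderOf π := by
    rw [← Equiv.Perm.lcm_cycleType]
    exact Multiset.dvd_lcm hc
  have h2 : orderOf π ∣ 2 := orderOf_dvd_of_pow_eq_one (by rwa [pow_two])
  exact le_antisymm (Nat.le_of_dvd two_pos (h1.trans h2))
    (Equiv.Perm.two_le_of_mem_cycleType hc)

/-- Two involutions with supports of equal size have equal sign. -/
lemma sign_eq_of_invol {N : ℕ} (τ κ : Equiv.Perm (Fin N))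
    (hτ : τ * τ = 1) (hκ : κ * κ = 1)
    (hlen : τ.support.card = κ.support.card) :
    Equiv.Perm.sign τ = Equiv.Perm.sign κ := by
  have hτ' := invol_cycleType τ hτ
  have hκ' := invol_cycleType κ hκ
  have hsum : τ.cycleType.sum = κ.cycleType.sum := by
    rw [Equiv.Perm.sum_cycleType, Equiv.Perm.sum_cycleType, hlen]
  have hcard : Multiset.card τ.cycleType = Multiset.card κ.cycleType := by
    rw [hτ', hκ'] at hsum
    simp only [Multiset.sum_replicate, smul_eq_mul] at hsum
    omega
  have hct : τ.cycleType = κ.cycleType := by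
    rw [hτ', hκ', hcard]
  rw [Equiv.Perm.sign_of_cycleType, Equiv.Perm.sign_of_cycleType, hct]

/-- If τ, κ are involutions with no common proper nonempty invariant subset and
the same number of disjoint transpositions, then some involution λ conjugates
each of them to the other. -/
theorem exists_involution_interchanging {N : ℕ} (τ κ : Equiv.Perm (Fin N))
    (hτ : τ * τ = 1) (hκ : κ * κ = 1)
    (hmin : NoCommonInvariant τ κ)
    (hlen : τ.support.card = κ.support.card) :
    ∃ l : Equiv.Perm (Fin N), l * l = 1 ∧ l * τ * l⁻¹ = κ ∧ l * κ * l⁻¹ = τ := by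
  classical
  rcases Nat.eq_zero_or_pos N with hN | hN
  · subst hN
    exact ⟨1, by ext x; exact x.elim0, by ext x; exact x.elim0, by ext x; exact x.elim0⟩
  have a : Fin N := ⟨0, hN⟩
  set σ : Equiv.Perm (Fin N) := τ * κ with hσdef
  have hτi : τ⁻¹ = τ := inv_eq_of_mul_eq_one_right hτ
  have hκi : κ⁻¹ = κ := inv_eq_of_mul_eq_one_right hκ
  have hσinv : σ⁻¹ = κ * τ := by rw [hσdef, mul_inv_rev, hτi, hκi]
  have hconjτ : τ * σ * τ⁻¹ = σ⁻¹ := by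
    rw [hσinv, hτi, hσdef, ← mul_assoc, hτ, one_mul]
  have hconjκ : κ * σ * κ⁻¹ = σ⁻¹ := by
    rw [hσinv, hκi, hσdef]
    calc κ * (τ * κ) * κ = (κ * τ) * (κ * κ) := by group
    _ = κ * τ := by rw [hκ, mul_one]
  -- conjugation relations for powers
  have relGen : ∀ (π : Equiv.Perm (Fin N)), π * σ * π⁻¹ = σ⁻¹ → π⁻¹ = π →
      ∀ m : ℤ, π * σ ^ m = σ ^ (-m) * π := by
    intro π hπσ hπi m
    have h2 : π * σ ^ m * π⁻¹ = (π * σ * π⁻¹) ^ m := by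
      simpa [MulAut.conj_apply] using map_zpow (MulAut.conj π) σ m
    rw [hπσ, inv_zpow, ← zpow_neg] at h2
    have h3 := congrArg (· * π) h2
    rw [mul_assoc, inv_mul_cancel, mul_one] at h3
    exact h3
  have relτ := relGen τ hconjτ hτi
  have relκ := relGen κ hconjκ hκi
  have pτ : ∀ (m : ℤ) (x : Fin N), τ ((σ ^ m) x) = (σ ^ (-m)) (τ x) := by
    intro m x
    rw [← Equiv.Perm.mul_apply, relτ m, Equiv.Perm.mul_apply]
  have pκ : ∀ (m : ℤ) (x : Fin N), κ ((σ ^ m) x) = (σ ^ (-m)) (κ x) := by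
    intro m x
    rw [← Equiv.Perm.mul_apply, relκ m, Equiv.Perm.mul_apply]
  have hττ : ∀ x : Fin N, τ (τ x) = x := by
    intro x
    rw [← Equiv.Perm.mul_apply, hτ, Equiv.Perm.one_apply]
  have comb : ∀ (i j : ℤ) (x : Fin N), (σ ^ i) ((σ ^ j) x) = (σ ^ (i + j)) x := by
    intro i j x
    rw [zpow_add, Equiv.Perm.mul_apply]
  have hκa : ∀ x : Fin N, κ x = (σ ^ (-1 : ℤ)) (τ x) := by
    intro x
    have h1 : κ = τ * σ := by rw [hσdef, ← mul_assoc, hτ, one_mul]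
    have h2 : κ x = τ (σ x) := by rw [h1, Equiv.Perm.mul_apply]
    rw [h2, show σ x = (σ ^ (1 : ℤ)) x by rw [zpow_one], pτ]
  have hκτ : ∀ x : Fin N, κ (τ x) = (σ ^ (-1 : ℤ)) x := by
    intro x
    rw [hκa (τ x), hττ]
  -- coverage: every point is in the orbit of a or of τ a
  have cover : ∀ x : Fin N, ∃ m : ℤ, (σ ^ m) a = x ∨ (σ ^ m) (τ a) = x := by
    set H : Finset (Fin N) := Finset.univ.filter
      (fun x => ∃ m : ℤ, (σ ^ m) a = x ∨ (σ ^ m) (τ a) = x) with hH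
    have hmem : ∀ x, x ∈ H ↔ ∃ m : ℤ, (σ ^ m) a = x ∨ (σ ^ m) (τ a) = x := by
      intro x; simp [hH]
    have hτH : InvSet τ H := by
      intro x hx
      rw [hmem] at hx ⊢
      obtain ⟨m, h | h⟩ := hx
      · exact ⟨-m, Or.inr (by rw [← h, pτ])⟩
      · exact ⟨-m, Or.inl (by rw [← h, pτ, hττ])⟩
    have hκH : InvSet κ H := by
      intro x hx
      rw [hmem] at hx ⊢
      obtain ⟨m, h | h⟩ := hx
      · exact ⟨-m + -1, Or.inr (by rw [← h, pκ, hκa a, comb])⟩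
      · exact ⟨-m + -1, Or.inl (by rw [← h, pκ, hκτ a, comb])⟩
    have ha : a ∈ H := by
      rw [hmem]
      exact ⟨0, Or.inl (by simp)⟩
    have hHuniv : H = Finset.univ := by
      by_contra hne
      exact hmin H ⟨a, ha⟩ hne ⟨hτH, hκH⟩
    intro x
    have hx : x ∈ H := hHuniv ▸ Finset.mem_univ x
    rwa [hmem] at hx
  -- any power of σ fixing a is the identity
  have perEq : ∀ j : ℤ, (σ ^ j) a = a → σ ^ j = 1 := by
    intro j hj
    have hj2 : (σ ^ (-j)) a = a := by
      conv_lhs => rw [← hj, comb]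
      simp
    have hj' : (σ ^ j) (τ a) = τ a := by
      have h2 := pτ (-j) a
      rw [hj2, neg_neg] at h2
      exact h2.symm
    ext x
    obtain ⟨m, h | h⟩ := cover x
    · rw [← h, comb, add_comm, ← comb, hj, Equiv.Perm.one_apply]
    · rw [← h, comb, add_comm, ← comb, hj', Equiv.Perm.one_apply]
  have perEqb : ∀ j : ℤ, (σ ^ j) (τ a) = τ a → σ ^ j = 1 := by
    intro j hj
    have h2 : τ ((σ ^ j) (τ a)) = (σ ^ (-j)) a := by rw [pτ, hττ]
    rw [hj, hττ] at h2
    have h3 := perEq (-j) h2.symm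
    have h4 : σ ^ j = (σ ^ (-j))⁻¹ := by rw [← zpow_neg, neg_neg]
    rw [h4, h3, inv_one]
  -- well-definedness of exponents along an orbit
  have eqExpGen : ∀ (b : Fin N), (∀ j : ℤ, (σ ^ j) b = b → σ ^ j = 1) →
      ∀ m m' c : ℤ, (σ ^ m) b = (σ ^ m') b → (σ ^ (c - m)) b = (σ ^ (c - m')) b := by
    intro b hper m m' c h
    have h1 : (σ ^ (m - m')) b = b := by
      have h2 : (σ ^ (-m')) ((σ ^ m) b) = (σ ^ (-m')) ((σ ^ m') b) := by rw [h]
      rw [comb, comb] at h2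
      rw [show m - m' = -m' + m by ring, h2, show -m' + m' = 0 by ring]
      simp
    have h3 := hper _ h1
    have h4 : σ ^ (c - m') = σ ^ (c - m) * σ ^ (m - m') := by
      rw [← zpow_add]
      congr 1
      ring
    rw [h4, h3, mul_one]
  have expEq : ∀ (b : Fin N) (e1 e2 : ℤ), e1 = e2 → (σ ^ e1) b = (σ ^ e2) b := by
    intro b e1 e2 h
    rw [h]
  -- case split on whether τ a is in the σ-orbit of a
  by_cases hsplit : ∃ t : ℤ, (σ ^ t) a = τ a
  · -- CASE A: a single σ-orbit
    obtain ⟨t, ht⟩ := hsplit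
    have hA : ∀ x : Fin N, ∃ m : ℤ, (σ ^ m) a = x := by
      intro x
      obtain ⟨m, h | h⟩ := cover x
      · exact ⟨m, h⟩
      · exact ⟨m + t, by rw [← comb, ht, h]⟩
    -- the order of σ is odd
    have hord : Odd (orderOf σ) := by
      by_cases h1 : σ = 1
      · rw [h1, orderOf_one]
        exact odd_one
      · have hfix : ∀ x : Fin N, σ x ≠ x := by
          intro x hx
          apply h1
          have ha' : σ a = a := by
            obtain ⟨m, hm⟩ := hA x
            rw [← hm] at hx
            have h2 : (σ ^ m) (σ a) = (σ ^ m) a := by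
              conv_rhs => rw [← hx]
              rw [show σ a = (σ ^ (1:ℤ)) a by rw [zpow_one], comb,
                show m + 1 = (1:ℤ) + m by ring, ← comb, zpow_one]
            exact (σ ^ m).injective h2
          ext y
          obtain ⟨m, hm⟩ := hA y
          rw [← hm, Equiv.Perm.one_apply,
            show σ ((σ ^ m) a) = (σ ^ (1:ℤ)) ((σ ^ m) a) by rw [zpow_one], comb,
            show (1:ℤ) + m = m + 1 by ring, ← comb,
            show (σ ^ (1:ℤ)) a = σ a by rw [zpow_one], ha']
        have hcyc : σ.IsCycle := ⟨a, hfix a, fun y _ => hA y⟩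
        have hsupp : σ.support = Finset.univ :=
          Finset.eq_univ_iff_forall.mpr (fun x => Equiv.Perm.mem_support.mpr (hfix x))
        have hsign : Equiv.Perm.sign σ = 1 := by
          rw [hσdef, map_mul, sign_eq_of_invol τ κ hτ hκ hlen]
          rcases Int.units_eq_one_or (Equiv.Perm.sign κ) with h | h <;> rw [h] <;> decide
        have h2 := hcyc.sign
        rw [hsupp, hsign, Finset.card_univ, Fintype.card_fin] at h2
        have hNodd : Odd N := by
          rcases Nat.even_or_odd N with he | ho
          · exfalso
            rw [he.neg_one_pow] at h2
            exact absurd h2 (by decide)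
          · exact ho
        rw [hcyc.orderOf, hsupp, Finset.card_univ, Fintype.card_fin]
        exact hNodd
    obtain ⟨w, hw⟩ := hord
    set c : ℤ := (w + 1) * (2 * t - 1) with hc
    have hσord : σ ^ ((orderOf σ : ℤ)) = 1 := by
      rw [zpow_natCast, pow_orderOf_eq_one]
    have hkey : ∀ d : ℤ, σ ^ (2 * c + d) = σ ^ (2 * t - 1 + d) := by
      intro d
      have he : 2 * c + d = (orderOf σ : ℤ) * (2 * t - 1) + (2 * t - 1 + d) := by
        rw [hc, hw]
        push_cast
        ring
      rw [he, zpow_add, zpow_mul, hσord, one_zpow, one_mul]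
    have finA : ∀ e1 e2 : ℤ, e1 = 2 * c + (e2 - (2 * t - 1)) → (σ ^ e1) a = (σ ^ e2) a := by
      intro e1 e2 he
      rw [he, hkey, show 2 * t - 1 + (e2 - (2 * t - 1)) = e2 by ring]
    obtain ⟨f, hf⟩ : ∃ f : Fin N → Fin N, ∀ m : ℤ, f ((σ ^ m) a) = (σ ^ (c - m)) a := by
      refine ⟨fun x => (σ ^ (c - Classical.choose (hA x))) a, fun m => ?_⟩
      exact eqExpGen a perEq _ m c (Classical.choose_spec (hA ((σ ^ m) a)))
    have hff : ∀ x, f (f x) = x := by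
      intro x
      obtain ⟨m, hm⟩ := hA x
      rw [← hm, hf, hf, show c - (c - m) = m by ring]
    set l : Equiv.Perm (Fin N) := ⟨f, f, hff, hff⟩ with hldef
    have happly : ∀ x, l x = f x := fun x => rfl
    have hll : l * l = 1 := by
      ext x
      rw [Equiv.Perm.mul_apply, happly, happly, hff, Equiv.Perm.one_apply]
    have hli : l⁻¹ = l := inv_eq_of_mul_eq_one_right hll
    have hconj : l * τ * l⁻¹ = κ := by
      rw [hli]
      refine Equiv.ext fun x => ?_
      obtain ⟨m, hm⟩ := hA x
      rw [← hm, Equiv.Perm.mul_apply, Equiv.Perm.mul_apply, pκ, hκa, happly, happly,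
        hf, pτ, ← ht, comb, comb, comb, hf]
      exact finA _ _ (by ring)
    refine ⟨l, hll, hconj, ?_⟩
    rw [← hconj, hli]
    calc l * (l * τ * l) * l = (l * l) * τ * (l * l) := by group
      _ = τ := by rw [hll, one_mul, mul_one]
  · -- CASE B: two disjoint σ-orbits
    push_neg at hsplit
    have excl : ∀ m m' : ℤ, (σ ^ m) a ≠ (σ ^ m') (τ a) := by
      intro m m' h
      apply hsplit (-m' + m)
      have h2 : (σ ^ (-m')) ((σ ^ m) a) = (σ ^ (-m')) ((σ ^ m') (τ a)) := by rw [h]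
      rw [comb, comb, show -m' + m' = 0 by ring] at h2
      simpa using h2
    have cover2 : ∀ x : Fin N, ¬ (∃ m : ℤ, (σ ^ m) a = x) → ∃ m : ℤ, (σ ^ m) (τ a) = x := by
      intro x hx
      obtain ⟨m, h | h⟩ := cover x
      · exact absurd ⟨m, h⟩ hx
      · exact ⟨m, h⟩
    obtain ⟨f, hfx, hfy⟩ : ∃ f : Fin N → Fin N,
        (∀ m : ℤ, f ((σ ^ m) a) = (σ ^ (0 - m)) a) ∧
        (∀ m : ℤ, f ((σ ^ m) (τ a)) = (σ ^ (-1 - m)) (τ a)) := by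
      refine ⟨fun x => if hx : ∃ m : ℤ, (σ ^ m) a = x then (σ ^ (0 - Classical.choose hx)) a
        else (σ ^ (-1 - Classical.choose (cover2 x hx))) (τ a), fun m => ?_, fun m => ?_⟩
      · have hex : ∃ m' : ℤ, (σ ^ m') a = (σ ^ m) a := ⟨m, rfl⟩
        simp only
        rw [dif_pos hex]
        exact eqExpGen a perEq _ m 0 (Classical.choose_spec hex)
      · have hnex : ¬ ∃ m' : ℤ, (σ ^ m') a = (σ ^ m) (τ a) := by
          rintro ⟨m', hm'⟩
          exact excl m' m hm'
        simp only
        rw [dif_neg hnex]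
        exact eqExpGen (τ a) perEqb _ m (-1) (Classical.choose_spec (cover2 _ hnex))
    have hff : ∀ x, f (f x) = x := by
      intro x
      obtain ⟨m, h | h⟩ := cover x
      · rw [← h, hfx, hfx]
        exact expEq _ _ _ (by ring)
      · rw [← h, hfy, hfy]
        exact expEq _ _ _ (by ring)
    set l : Equiv.Perm (Fin N) := ⟨f, f, hff, hff⟩ with hldef
    have happly : ∀ x, l x = f x := fun x => rfl
    have hll : l * l = 1 := by
      ext x
      rw [Equiv.Perm.mul_apply, happly, happly, hff, Equiv.Perm.one_apply]
    have hli : l⁻¹ = l := inv_eq_of_mul_eq_one_right hll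
    have hconj : l * τ * l⁻¹ = κ := by
      rw [hli]
      refine Equiv.ext fun x => ?_
      obtain ⟨m, h | h⟩ := cover x
      · rw [← h, Equiv.Perm.mul_apply, Equiv.Perm.mul_apply, happly, happly,
          hfx, pτ, hfy, pκ, hκa, comb]
        exact expEq (τ a) (-1 - -(0 - m)) (-m + -1) (by ring)
      · rw [← h, Equiv.Perm.mul_apply, Equiv.Perm.mul_apply, happly, happly,
          hfy, pτ, hττ, hfx, pκ, hκτ, comb]
        exact expEq a (0 - -(-1 - m)) (-m + -1) (by ring)
    refine ⟨l, hll, hconj, ?_⟩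
    rw [← hconj, hli]
    calc l * (l * τ * l) * l = (l * l) * τ * (l * l) := by group
      _ = τ := by rw [hll, one_mul, mul_one]
end

section
/- Let τ, κ be involutions in Σ_N, each a product of exactly j disjoint transpositions, such that no proper nonempty subset of {1,…,N} is invariant under both. Then for every σ ∈ Σ_N commuting with both τ and κ, S(σ,τ)·S(σ,κ) = 1, where S(σ,τ) = (−1)^{#{ {a,b} : a<b, τ(a)=b, σ(a)>σ(b) }}. -/
open Equiv Finset

def FlipSet {N : ℕ} (σ τ : Equiv.Perm (Fin N)) : Finset (Fin N) :=
  Finset.univ.filter (fun a => a < τ a ∧ σ (τ a) < σ a)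

lemma Ssign_eq {N : ℕ} (σ τ : Equiv.Perm (Fin N)) :
    Ssign σ τ = (-1) ^ (FlipSet σ τ).card := by
  unfold Ssign FlipSet
  congr 1
  apply Finset.card_bij (fun p _ => p.1)
  · intro p hp
    simp only [mem_filter, mem_univ, true_and] at hp ⊢
    obtain ⟨h1, h2, h3⟩ := hp
    exact ⟨h2 ▸ h1, h2 ▸ h3⟩
  · intro p hp q hq h
    simp only [mem_filter, mem_univ, true_and] at hp hq
    exact Prod.ext h (by rw [← hp.2.1, ← hq.2.1, h])
  · intro a ha
    simp only [mem_filter, mem_univ, true_and] at ha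
    exact ⟨(a, τ a), by simp [ha.1, ha.2], rfl⟩

lemma fix_iff {N : ℕ} {σ τ : Equiv.Perm (Fin N)} (hc : Commute σ τ) :
    ∀ x : Fin N, τ x = x ↔ τ (σ x) = σ x := by
  intro x
  have hcp : σ (τ x) = τ (σ x) := by
    have := congrArg (fun g => g x) hc.eq
    simpa [Equiv.Perm.mul_apply] using this
  constructor
  · intro h; rw [← hcp, h]
  · intro h; rw [← hcp] at h; exact σ.injective h


lemma sign_eq_of_conj {α β : Type*} [Fintype α] [DecidableEq α] [Fintype β] [DecidableEq β]
    (f : Equiv.Perm α) (g : Equiv.Perm β) (e : α ≃ β) (h : ∀ x, g (e x) = e (f x)) :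
    Equiv.Perm.sign g = Equiv.Perm.sign f := by
  have hg : g = e.permCongr f := by
    apply Equiv.ext
    intro y
    rw [← e.apply_symm_apply y, h]
    simp [Equiv.permCongr_apply]
  rw [hg, Equiv.Perm.sign_permCongr]

lemma core {N : ℕ} (τ : Equiv.Perm (Fin N)) (hτ : τ * τ = 1) :
    ∀ (n : ℕ) (σ : Equiv.Perm (Fin N)) (hc : Commute σ τ), (FlipSet σ τ).card = n →
      Equiv.Perm.sign σ = (-1) ^ n * Equiv.Perm.sign (σ.subtypePerm (p := fun y => τ y = y) (fun x => (fix_iff hc x).symm)) := by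
  have hττ : ∀ x, τ (τ x) = x := by
    intro x; have := congrArg (fun g => g x) hτ; simpa [Equiv.Perm.mul_apply] using this
  intro n
  induction n with
  | zero =>
    intro σ hc hcard
    have hcp : ∀ x, σ (τ x) = τ (σ x) := by
      intro x; have := congrArg (fun g => g x) hc.eq
      simpa [Equiv.Perm.mul_apply] using this
    -- base case: no flipped pairs
    have hbase : ∀ x : Fin N, x < τ x → σ x < σ (τ x) := by
      intro x hx
      have hnot : x ∉ FlipSet σ τ := by
        rw [Finset.card_eq_zero] at hcard; simp [hcard]
      simp only [FlipSet, mem_filter, mem_univ, true_and, not_and] at hnot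
      have hne : σ x ≠ σ (τ x) := fun h => (ne_of_lt hx) (σ.injective h)
      exact lt_of_le_of_ne (not_lt.mp (hnot hx)) hne
    -- three predicates
    have hp : ∀ x : Fin N, x < τ x ↔ σ x < τ (σ x) := by
      intro x
      constructor
      · intro h; rw [← hcp]; exact hbase x h
      · intro h
        rcases lt_trichotomy x (τ x) with h1 | h1 | h1
        · exact h1
        · exfalso; rw [(fix_iff hc x).mp h1.symm] at h; exact lt_irrefl _ h
        · exfalso
          have h2 : τ x < τ (τ x) := by rw [hττ]; exact h1
          have := hbase (τ x) h2
          rw [hττ, hcp] at this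
          exact lt_asymm h this
    have hq : ∀ x : Fin N, τ x < x ↔ τ (σ x) < σ x := by
      intro x
      constructor
      · intro h
        have h2 : τ x < τ (τ x) := by rw [hττ]; exact h
        have := hbase (τ x) h2
        rw [hττ, hcp] at this; exact this
      · intro h
        rcases lt_trichotomy x (τ x) with h1 | h1 | h1
        · exfalso; exact lt_asymm h ((hp x).mp h1)
        · exfalso; rw [(fix_iff hc x).mp h1.symm] at h; exact lt_irrefl _ h
        · exact h1
    have hf := fix_iff hc
    -- decomposition
    have hdec : σ = Equiv.Perm.ofSubtype (σ.subtypePerm (p := fun y => y < τ y) (fun x => (hp x).symm)) *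
        Equiv.Perm.ofSubtype (σ.subtypePerm (p := fun y => τ y < y) (fun x => (hq x).symm)) *
        Equiv.Perm.ofSubtype (σ.subtypePerm (p := fun y => τ y = y) (fun x => (hf x).symm)) := by
      apply Equiv.ext
      intro x
      simp only [Equiv.Perm.mul_apply]
      rcases lt_trichotomy x (τ x) with h1 | h1 | h1
      · have hnf : ¬ (τ x = x) := fun h => (ne_of_lt h1) h.symm
        have hnq : ¬ (τ x < x) := lt_asymm h1
        rw [Equiv.Perm.ofSubtype_apply_of_not_mem (σ.subtypePerm (p := fun y => τ y = y) (fun x => (hf x).symm)) hnf,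
            Equiv.Perm.ofSubtype_apply_of_not_mem (σ.subtypePerm (p := fun y => τ y < y) (fun x => (hq x).symm)) hnq,
            Equiv.Perm.ofSubtype_apply_of_mem (σ.subtypePerm (p := fun y => y < τ y) (fun x => (hp x).symm)) h1]
        simp [Equiv.Perm.subtypePerm_apply]
      · have hfx : τ x = x := h1.symm
        have hfσ : τ (σ x) = σ x := (hf x).mp hfx
        have hnq : ¬ (τ (σ x) < σ x) := by rw [hfσ]; exact lt_irrefl _
        have hnp : ¬ (σ x < τ (σ x)) := by rw [hfσ]; exact lt_irrefl _
        rw [Equiv.Perm.ofSubtype_apply_of_mem (σ.subtypePerm (p := fun y => τ y = y) (fun x => (hf x).symm)) hfx]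
        simp only [Equiv.Perm.subtypePerm_apply]
        rw [Equiv.Perm.ofSubtype_apply_of_not_mem (σ.subtypePerm (p := fun y => τ y < y) (fun x => (hq x).symm)) hnq,
            Equiv.Perm.ofSubtype_apply_of_not_mem (σ.subtypePerm (p := fun y => y < τ y) (fun x => (hp x).symm)) hnp]
      · have hnf : ¬ (τ x = x) := fun h => (ne_of_lt h1) h
        have hqσ : τ (σ x) < σ x := (hq x).mp h1
        have hnp : ¬ (σ x < τ (σ x)) := lt_asymm hqσ
        rw [Equiv.Perm.ofSubtype_apply_of_not_mem (σ.subtypePerm (p := fun y => τ y = y) (fun x => (hf x).symm)) hnf,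
            Equiv.Perm.ofSubtype_apply_of_mem (σ.subtypePerm (p := fun y => τ y < y) (fun x => (hq x).symm)) h1]
        simp only [Equiv.Perm.subtypePerm_apply]
        rw [Equiv.Perm.ofSubtype_apply_of_not_mem (σ.subtypePerm (p := fun y => y < τ y) (fun x => (hp x).symm)) hnp]
    -- the equiv between mins and maxes
    have hsq : Equiv.Perm.sign (σ.subtypePerm (p := fun y => τ y < y) (fun x => (hq x).symm)) = Equiv.Perm.sign (σ.subtypePerm (p := fun y => y < τ y) (fun x => (hp x).symm)) :=
      sign_eq_of_conj (σ.subtypePerm (p := fun y => y < τ y) (fun x => (hp x).symm)) (σ.subtypePerm (p := fun y => τ y < y) (fun x => (hq x).symm))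
        { toFun := fun x => ⟨τ x.1, by rw [hττ]; exact x.2⟩
          invFun := fun y => ⟨τ y.1, by rw [hττ]; exact y.2⟩
          left_inv := fun x => Subtype.ext (hττ x.1)
          right_inv := fun y => Subtype.ext (hττ y.1) }
        (fun x => Subtype.ext (by simp only [Equiv.Perm.subtypePerm_apply, Equiv.coe_fn_mk]; exact hcp x.1))
    calc Equiv.Perm.sign σ
        = Equiv.Perm.sign (σ.subtypePerm (p := fun y => y < τ y) (fun x => (hp x).symm)) * Equiv.Perm.sign (σ.subtypePerm (p := fun y => τ y < y) (fun x => (hq x).symm)) *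
            Equiv.Perm.sign (σ.subtypePerm (p := fun y => τ y = y) (fun x => (hf x).symm)) := by
          conv_lhs => rw [hdec]
          simp [Equiv.Perm.sign_ofSubtype]
      _ = (-1) ^ 0 * Equiv.Perm.sign (σ.subtypePerm (p := fun y => τ y = y) (fun x => (hf x).symm)) := by
          rw [hsq, Int.units_mul_self]; simp
  | succ n ih =>
    intro σ hc hcard
    have hcp : ∀ x, σ (τ x) = τ (σ x) := by
      intro x; have := congrArg (fun g => g x) hc.eq
      simpa [Equiv.Perm.mul_apply] using this
    -- pick a flipped pair
    have hne : (FlipSet σ τ).Nonempty := by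
      rw [← Finset.card_pos, hcard]; omega
    obtain ⟨a, ha⟩ := hne
    have haf : a < τ a ∧ σ (τ a) < σ a := by
      simpa [FlipSet] using ha
    have hane : a ≠ τ a := ne_of_lt haf.1
    set s₂ : Equiv.Perm (Fin N) := Equiv.swap (σ a) (σ (τ a)) * σ with hs₂def
    have hsw : σ = Equiv.swap (σ a) (σ (τ a)) * s₂ := by
      rw [hs₂def, ← mul_assoc, swap_mul_self, one_mul]
    have hs₂a : s₂ a = σ (τ a) := by
      simp [hs₂def, Equiv.Perm.mul_apply, Equiv.swap_apply_left]
    have hs₂ta : s₂ (τ a) = σ a := by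
      simp [hs₂def, Equiv.Perm.mul_apply, Equiv.swap_apply_right]
    have hs₂other : ∀ b : Fin N, b ≠ a → b ≠ τ a → s₂ b = σ b := by
      intro b h1 h2
      simp only [hs₂def, Equiv.Perm.mul_apply]
      apply Equiv.swap_apply_of_ne_of_ne
      · exact fun h => h1 (σ.injective h)
      · exact fun h => h2 (σ.injective h)
    -- s₂ commutes with τ
    have hc₂ : Commute s₂ τ := by
      have hswc : Commute (Equiv.swap (σ a) (σ (τ a))) τ := by
        unfold Commute SemiconjBy
        apply Equiv.ext
        intro x
        simp only [Equiv.Perm.mul_apply]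
        by_cases h1 : x = σ a
        · subst h1
          rw [Equiv.swap_apply_left, ← hcp, ← hcp, hττ, Equiv.swap_apply_right]
        · by_cases h2 : x = σ (τ a)
          · subst h2
            rw [Equiv.swap_apply_right, ← hcp, ← hcp, hττ, Equiv.swap_apply_left]
          · rw [Equiv.swap_apply_of_ne_of_ne h1 h2]
            rw [Equiv.swap_apply_of_ne_of_ne]
            · intro h
              apply h2
              have hx : x = τ (σ a) := by rw [← h, hττ]
              rw [hx, ← hcp]
            · intro h
              apply h1
              have hx : x = τ (σ (τ a)) := by rw [← h, hττ]
              rw [hx, ← hcp, hττ]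
      exact Commute.mul_left hswc hc
    -- flip set decreases
    have hfs : FlipSet s₂ τ = (FlipSet σ τ).erase a := by
      apply Finset.ext
      intro b
      simp only [FlipSet, Finset.mem_erase, Finset.mem_filter, Finset.mem_univ, true_and]
      by_cases h1 : b = a
      · subst h1
        constructor
        · rintro ⟨hb1, hb2⟩
          rw [hs₂a, hs₂ta] at hb2
          exact absurd hb2 (lt_asymm haf.2)
        · rintro ⟨hb, -⟩; exact absurd rfl hb
      · by_cases h2 : b = τ a
        · subst h2
          have : τ (τ a) = a := hττ a
          constructor
          · rintro ⟨hb1, -⟩; rw [this] at hb1; exact absurd hb1 (lt_asymm haf.1)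
          · rintro ⟨-, hb1, -⟩; rw [this] at hb1; exact absurd hb1 (lt_asymm haf.1)
        · have h3 : τ b ≠ a := fun h => h2 (by rw [← h, hττ])
          have h4 : τ b ≠ τ a := fun h => h1 (τ.injective h)
          rw [hs₂other b h1 h2, hs₂other (τ b) h3 h4]
          constructor
          · rintro ⟨u, v⟩; exact ⟨h1, u, v⟩
          · rintro ⟨-, u, v⟩; exact ⟨u, v⟩
    have hfscard : (FlipSet s₂ τ).card = n := by
      rw [hfs, Finset.card_erase_of_mem ha, hcard]; rfl
    -- fixed-point perms agree
    have hfixeq : s₂.subtypePerm (p := fun y => τ y = y) (fun x => (fix_iff hc₂ x).symm) = σ.subtypePerm (p := fun y => τ y = y) (fun x => (fix_iff hc x).symm) := by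
      apply Equiv.ext
      rintro ⟨x, hx⟩
      apply Subtype.ext
      simp only [Equiv.Perm.subtypePerm_apply]
      apply hs₂other
      · intro h; subst h; exact hane hx.symm
      · intro h; subst h; rw [hττ] at hx; exact hane hx
    have hσne : σ a ≠ σ (τ a) := fun h => hane (σ.injective h)
    have := ih s₂ hc₂ hfscard
    rw [hfixeq] at this
    calc Equiv.Perm.sign σ
        = Equiv.Perm.sign (Equiv.swap (σ a) (σ (τ a))) * Equiv.Perm.sign s₂ := by
          conv_lhs => rw [hsw]
          simp
      _ = (-1) * ((-1) ^ n * Equiv.Perm.sign (σ.subtypePerm (p := fun y => τ y = y) (fun x => (fix_iff hc x).symm))) := by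
          rw [Equiv.Perm.sign_swap hσne, this]
      _ = (-1) ^ (n + 1) * Equiv.Perm.sign (σ.subtypePerm (p := fun y => τ y = y) (fun x => (fix_iff hc x).symm)) := by
          rw [pow_succ, ← mul_assoc, mul_comm (-1 : ℤˣ) ((-1 : ℤˣ) ^ n)]

lemma fix_card_le_one {N j : ℕ} (τ κ : Equiv.Perm (Fin N))
    (hτ : τ * τ = 1) (hκ : κ * κ = 1)
    (hτl : τ.support.card = 2 * j) (hκl : κ.support.card = 2 * j)
    (hmin : NoCommonInvariant τ κ) :
    (Finset.univ.filter (fun x : Fin N => τ x = x)).card ≤ 1 := by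
  by_contra hcon
  push_neg at hcon
  obtain ⟨a, haf, b, hbf, hab⟩ := Finset.one_lt_card.mp hcon
  simp only [Finset.mem_filter, Finset.mem_univ, true_and] at haf hbf
  -- haf : τ a = a, hbf : τ b = b
  have hττ : ∀ x, τ (τ x) = x := by
    intro x; have := congrArg (fun g => g x) hτ; simpa [Equiv.Perm.mul_apply] using this
  have hκκ : ∀ x, κ (κ x) = x := by
    intro x; have := congrArg (fun g => g x) hκ; simpa [Equiv.Perm.mul_apply] using this
  have hτinv : τ⁻¹ = τ := by
    rw [inv_eq_iff_mul_eq_one]; exact hτ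
  have hκinv : κ⁻¹ = κ := by
    rw [inv_eq_iff_mul_eq_one]; exact hκ
  set ρ : Equiv.Perm (Fin N) := τ * κ with hρdef
  have hρinv : ρ⁻¹ = κ * τ := by rw [hρdef, mul_inv_rev, hτinv, hκinv]
  -- conjugation identities
  have hτρ : ∀ k : ℕ, τ * ρ ^ k = (ρ ^ k)⁻¹ * τ := by
    intro k
    have h1 : τ * ρ * τ⁻¹ = ρ⁻¹ := by
      rw [hτinv, hρinv, hρdef, ← mul_assoc, hτ, one_mul]
    calc τ * ρ ^ k = (τ * ρ ^ k * τ⁻¹) * τ := by rw [mul_assoc, inv_mul_cancel, mul_one]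
      _ = (ρ ^ k)⁻¹ * τ := by rw [← conj_pow, h1, inv_pow]
  have hκρ : ∀ k : ℕ, κ * ρ ^ k = (ρ ^ k)⁻¹ * κ := by
    intro k
    have h1 : κ * ρ * κ⁻¹ = ρ⁻¹ := by
      rw [hκinv, hρinv, hρdef, mul_assoc, mul_assoc, hκ, mul_one]
    calc κ * ρ ^ k = (κ * ρ ^ k * κ⁻¹) * κ := by rw [mul_assoc, inv_mul_cancel, mul_one]
      _ = (ρ ^ k)⁻¹ * κ := by rw [← conj_pow, h1, inv_pow]
  have hord : 0 < orderOf ρ := orderOf_pos ρ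
  -- the orbit of a
  set H : Finset (Fin N) := (Finset.range (orderOf ρ)).image (fun k => (ρ ^ k) a) with hHdef
  have hmemH : ∀ m : ℕ, (ρ ^ m) a ∈ H := by
    intro m
    rw [hHdef, Finset.mem_image]
    exact ⟨m % orderOf ρ, Finset.mem_range.mpr (Nat.mod_lt _ hord),
      by rw [pow_mod_orderOf]⟩
  have hinvpow : ∀ k : ℕ, (ρ ^ k)⁻¹ = ρ ^ (orderOf ρ * k - k) := by
    intro k
    have hk : orderOf ρ * k - k + k = orderOf ρ * k := by
      have : k ≤ orderOf ρ * k := Nat.le_mul_of_pos_left k hord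
      omega
    rw [inv_eq_iff_mul_eq_one, ← pow_add,
      show k + (orderOf ρ * k - k) = orderOf ρ * k by omega, pow_mul, pow_orderOf_eq_one, one_pow]
  have hκa : κ a = ρ⁻¹ a := by
    rw [hρinv]
    simp only [Equiv.Perm.mul_apply]
    rw [haf]
  have hinvτ : InvSet τ H := by
    intro x hx
    rw [hHdef, Finset.mem_image] at hx
    obtain ⟨k, -, hk⟩ := hx
    rw [← hk, show τ ((ρ ^ k) a) = (τ * ρ ^ k) a from rfl, hτρ k]
    simp only [Equiv.Perm.mul_apply]
    rw [haf, hinvpow]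
    exact hmemH _
  have hinvκ : InvSet κ H := by
    intro x hx
    rw [hHdef, Finset.mem_image] at hx
    obtain ⟨k, -, hk⟩ := hx
    rw [← hk, show κ ((ρ ^ k) a) = (κ * ρ ^ k) a from rfl, hκρ k]
    simp only [Equiv.Perm.mul_apply]
    rw [hκa, show (ρ^k)⁻¹ (ρ⁻¹ a) = ((ρ^k)⁻¹ * ρ⁻¹) a from rfl, ← mul_inv_rev, ← pow_succ']
    rw [hinvpow]
    exact hmemH _
  have hHne : H.Nonempty := ⟨a, by simpa using hmemH 0⟩
  have hHuniv : H = Finset.univ := by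
    by_contra hne
    exact hmin H hHne hne ⟨hinvτ, hinvκ⟩
  have hsurj : ∀ x : Fin N, ∃ k : ℕ, k < orderOf ρ ∧ (ρ ^ k) a = x := by
    intro x
    have : x ∈ H := hHuniv ▸ Finset.mem_univ x
    rw [hHdef, Finset.mem_image] at this
    obtain ⟨k, hk1, hk2⟩ := this
    exact ⟨k, Finset.mem_range.mp hk1, hk2⟩
  have hstab : ∀ m : ℕ, (ρ ^ m) a = a → ρ ^ m = 1 := by
    intro m hm
    apply Equiv.ext
    intro x
    obtain ⟨k, -, hk⟩ := hsurj x
    rw [← hk]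
    show (ρ ^ m) ((ρ ^ k) a) = (ρ ^ k) a
    rw [show (ρ ^ m) ((ρ ^ k) a) = (ρ ^ m * ρ ^ k) a from rfl, ← pow_add, Nat.add_comm,
      pow_add]
    show (ρ ^ k) ((ρ ^ m) a) = _
    rw [hm]
  -- order of ρ equals N
  have hordN : orderOf ρ = N := by
    have hbij : Function.Bijective (fun k : Fin (orderOf ρ) => (ρ ^ (k : ℕ)) a) := by
      constructor
      · intro i j hij
        simp only at hij
        rcases le_total (i : ℕ) (j : ℕ) with h | h
        · have : (ρ ^ ((j : ℕ) - (i : ℕ))) a = a := by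
            have := congrArg (fun x => ((ρ ^ (i : ℕ))⁻¹) x) hij
            rw [show ((ρ ^ (i:ℕ))⁻¹) ((ρ ^ (i:ℕ)) a) = ((ρ ^ (i:ℕ))⁻¹ * ρ ^ (i:ℕ)) a from rfl,
              inv_mul_cancel] at this
            rw [show ((ρ ^ (i:ℕ))⁻¹) ((ρ ^ (j:ℕ)) a) = ((ρ ^ (i:ℕ))⁻¹ * ρ ^ (j:ℕ)) a from rfl] at this
            rw [show (ρ ^ (i:ℕ))⁻¹ * ρ ^ (j:ℕ) = ρ ^ ((j:ℕ) - (i:ℕ)) by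
              rw [eq_comm, eq_inv_mul_iff_mul_eq, ← pow_add]; congr 1; omega] at this
            simp at this
            exact this.symm
          have hdvd := orderOf_dvd_of_pow_eq_one (hstab _ this)
          have hlt : (j : ℕ) - (i : ℕ) < orderOf ρ := by
            have := j.2; omega
          have : (j : ℕ) - (i : ℕ) = 0 := Nat.eq_zero_of_dvd_of_lt hdvd hlt
          apply Fin.ext; omega
        · have : (ρ ^ ((i : ℕ) - (j : ℕ))) a = a := by
            have := congrArg (fun x => ((ρ ^ (j : ℕ))⁻¹) x) hij.symm
            rw [show ((ρ ^ (j:ℕ))⁻¹) ((ρ ^ (j:ℕ)) a) = ((ρ ^ (j:ℕ))⁻¹ * ρ ^ (j:ℕ)) a from rfl,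
              inv_mul_cancel] at this
            rw [show ((ρ ^ (j:ℕ))⁻¹) ((ρ ^ (i:ℕ)) a) = ((ρ ^ (j:ℕ))⁻¹ * ρ ^ (i:ℕ)) a from rfl] at this
            rw [show (ρ ^ (j:ℕ))⁻¹ * ρ ^ (i:ℕ) = ρ ^ ((i:ℕ) - (j:ℕ)) by
              rw [eq_comm, eq_inv_mul_iff_mul_eq, ← pow_add]; congr 1; omega] at this
            simp at this
            exact this.symm
          have hdvd := orderOf_dvd_of_pow_eq_one (hstab _ this)
          have hlt : (i : ℕ) - (j : ℕ) < orderOf ρ := by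
            have := i.2; omega
          have : (i : ℕ) - (j : ℕ) = 0 := Nat.eq_zero_of_dvd_of_lt hdvd hlt
          apply Fin.ext; omega
      · intro x
        obtain ⟨k, hk1, hk2⟩ := hsurj x
        exact ⟨⟨k, hk1⟩, hk2⟩
    have := Fintype.card_of_bijective hbij
    simpa using this
  -- b gives N even
  obtain ⟨k, hkord, hk⟩ := hsurj b
  have hk0 : k ≠ 0 := by
    intro h; subst h; simp at hk; exact hab hk
  have h2k : ρ ^ (2 * k) = 1 := by
    apply hstab
    have h1 : τ b = b := hbf
    rw [← hk] at h1
    rw [show τ ((ρ ^ k) a) = (τ * ρ ^ k) a from rfl, hτρ k] at h1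
    simp only [Equiv.Perm.mul_apply] at h1
    rw [haf] at h1
    have := congrArg (fun x => (ρ ^ k) x) h1
    rw [show (ρ ^ k) (((ρ ^ k)⁻¹) a) = (ρ ^ k * (ρ ^ k)⁻¹) a from rfl, mul_inv_cancel] at this
    rw [show (ρ ^ k) ((ρ ^ k) a) = (ρ ^ k * ρ ^ k) a from rfl, ← pow_add] at this
    simp only [Equiv.Perm.one_apply] at this
    rw [show k + k = 2 * k by omega] at this
    exact this.symm
  have hNdvd2k : N ∣ 2 * k := by
    rw [← hordN]; exact orderOf_dvd_of_pow_eq_one h2k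
  have hkN : k < N := by rw [← hordN]; exact hkord
  have hNeven : N = 2 * k := by
    obtain ⟨c, hc⟩ := hNdvd2k
    have hN0 : 0 < N := by omega
    have hc2 : c < 2 := by
      by_contra hge
      push_neg at hge
      have : N * 2 ≤ N * c := Nat.mul_le_mul_left N hge
      omega
    have hc1 : c = 1 := by
      interval_cases c
      · omega
      · rfl
    subst hc1
    omega
  -- κ has a fixed point, forcing N odd
  have hcard_fix : ∀ (π : Equiv.Perm (Fin N)),
      (Finset.univ.filter fun x => π x = x).card + π.support.card = N := by
    intro π
    have := Finset.card_filter_add_card_filter_not (s := (Finset.univ : Finset (Fin N)))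
      (p := fun x => π x = x)
    simpa [Equiv.Perm.support, Finset.card_univ] using this
  have h2le : 2 ≤ (Finset.univ.filter fun x : Fin N => κ x = x).card := by
    have h1 := hcard_fix τ
    have h2 := hcard_fix κ
    rw [hτl] at h1
    rw [hκl] at h2
    omega
  obtain ⟨c, hcfix⟩ : ∃ x : Fin N, κ x = x := by
    have hpos : (Finset.univ.filter fun x : Fin N => κ x = x).Nonempty :=
      Finset.card_pos.mp (by omega)
    obtain ⟨x, hx⟩ := hpos
    exact ⟨x, (Finset.mem_filter.mp hx).2⟩
  obtain ⟨t, -, ht⟩ := hsurj c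
  have hodd : ρ ^ (2 * t + 1) = 1 := by
    apply hstab
    have h1 : κ ((ρ ^ t) a) = (ρ ^ t) a := by rw [ht, hcfix]
    rw [show κ ((ρ ^ t) a) = (κ * ρ ^ t) a from rfl, hκρ t] at h1
    simp only [Equiv.Perm.mul_apply] at h1
    rw [hκa, show ((ρ ^ t)⁻¹) (ρ⁻¹ a) = ((ρ ^ t)⁻¹ * ρ⁻¹) a from rfl, ← mul_inv_rev,
      ← pow_succ'] at h1
    have := congrArg (fun x => (ρ ^ (t + 1)) x) h1
    rw [show (ρ ^ (t+1)) (((ρ ^ (t+1))⁻¹) a) = (ρ ^ (t+1) * (ρ ^ (t+1))⁻¹) a from rfl,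
      mul_inv_cancel] at this
    rw [show (ρ ^ (t+1)) ((ρ ^ t) a) = (ρ ^ (t+1) * ρ ^ t) a from rfl, ← pow_add] at this
    simp only [Equiv.Perm.one_apply] at this
    rw [show t + 1 + t = 2 * t + 1 by omega] at this
    exact this.symm
  have hNdvdodd : N ∣ 2 * t + 1 := by
    rw [← hordN]; exact orderOf_dvd_of_pow_eq_one hodd
  obtain ⟨d, hd⟩ := hNdvdodd
  have : 2 * t + 1 = 2 * (k * d) := by rw [hd, hNeven]; ring
  omega


/-- If τ, κ are involutions of the same length with no common proper nonempty
invariant subset, then any σ commuting with both satisfies S(σ,τ)·S(σ,κ) = 1. -/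
theorem Ssign_prod_eq_one {N j : ℕ} (τ κ : Equiv.Perm (Fin N))
    (hτ : τ * τ = 1) (hκ : κ * κ = 1)
    (hτl : τ.support.card = 2 * j) (hκl : κ.support.card = 2 * j)
    (hmin : NoCommonInvariant τ κ) :
    ∀ σ : Equiv.Perm (Fin N), Commute σ τ → Commute σ κ →
      Ssign σ τ * Ssign σ κ = 1 := by
  intro σ hcτ hcκ
  have h1 := core τ hτ (FlipSet σ τ).card σ hcτ rfl
  have h2 := core κ hκ (FlipSet σ κ).card σ hcκ rfl
  have hmin' : NoCommonInvariant κ τ := fun H hne hnu hinv => hmin H hne hnu ⟨hinv.2, hinv.1⟩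
  have hfixτ : Equiv.Perm.sign (σ.subtypePerm (p := fun y => τ y = y) (fun x => (fix_iff hcτ x).symm)) = 1 := by
    haveI hsub : Subsingleton {x : Fin N // τ x = x} := by
      rw [← Fintype.card_le_one_iff_subsingleton, Fintype.card_subtype]
      exact fix_card_le_one τ κ hτ hκ hτl hκl hmin
    have : σ.subtypePerm (p := fun y => τ y = y) (fun x => (fix_iff hcτ x).symm) = 1 := Equiv.ext fun x => Subsingleton.elim _ _
    rw [this, map_one]
  have hfixκ : Equiv.Perm.sign (σ.subtypePerm (p := fun y => κ y = y) (fun x => (fix_iff hcκ x).symm)) = 1 := by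
    haveI hsub : Subsingleton {x : Fin N // κ x = x} := by
      rw [← Fintype.card_le_one_iff_subsingleton, Fintype.card_subtype]
      exact fix_card_le_one κ τ hκ hτ hκl hτl hmin'
    have : σ.subtypePerm (p := fun y => κ y = y) (fun x => (fix_iff hcκ x).symm) = 1 := Equiv.ext fun x => Subsingleton.elim _ _
    rw [this, map_one]
  rw [hfixτ, mul_one] at h1
  rw [hfixκ, mul_one] at h2
  have hu : ((-1 : ℤˣ) ^ (FlipSet σ τ).card) * ((-1 : ℤˣ) ^ (FlipSet σ κ).card) = 1 := by
    rw [← h1, ← h2]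
    exact Int.units_mul_self _
  have hcast : ∀ m : ℕ, ((-1 : ℤ)) ^ m = (((-1 : ℤˣ) ^ m : ℤˣ) : ℤ) := by
    intro m
    rw [Units.val_pow_eq_pow_val]
    norm_num
  rw [Ssign_eq, Ssign_eq, hcast, hcast, ← Units.val_mul, hu, Units.val_one]
end

section
/- Let τ, κ be involutions in Σ_N such that no proper nonempty subset of {1,…,N} is invariant under both τ and κ, and suppose τ and κ are products of different numbers of disjoint transpositions. Then there exists an involution σ ∈ Σ_N commuting with both τ and κ such that S(σ,τ)·S(σ,κ) = −1, where S(σ,τ) = (−1)^{#{ {a,b} : a<b, τ(a)=b, σ(a)>σ(b) }}. -/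
open Equiv Finset

/-!
We may assume that `κ` fixes a point `x₀`: otherwise `τ` does, since both being fixed-point-free
would give them the same length. The orbit of `x₀` under the rotation `τ κ` is invariant under
both involutions, hence is everything, and labelling it by `ZMod N` turns `κ` into `j ↦ -j` and
`τ` into `j ↦ 1 - j`. For odd `N` these reflections are conjugate by a rotation, contradicting the
hypothesis on lengths; so `N = h + h`, and `σ` is the half-turn `j ↦ j + h`.
For a reflection `π : j ↦ c - j`, pairing `{a, b}` with `{σ b, σ a}` shows that `S(σ, π)` only
counts the transpositions shared by `σ` and `π`, i.e. the solutions of `2 j = c - h` up to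
`j ↦ j + h`. These exist for exactly one of `c = 0, 1`, and then form a single pair `{j, j + h}`.
-/

theorem apply_apply_of_mul_self_eq_one {α : Type*} {σ : Perm α} (hσ : σ * σ = 1) (a : α) :
    σ (σ a) = a := by
  simpa using DFunLike.congr_fun hσ a

theorem semiconjBy_mul_inv_left {G : Type*} [Group G] {a b : G} (ha : a * a = 1)
    (hb : b * b = 1) : SemiconjBy a (a * b) (a * b)⁻¹ := by
  rw [SemiconjBy, mul_inv_rev, inv_eq_of_mul_eq_one_right ha, inv_eq_of_mul_eq_one_right hb,
    ← mul_assoc, ha, one_mul, mul_assoc, ha, mul_one]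

theorem semiconjBy_mul_inv_right {G : Type*} [Group G] {a b : G} (ha : a * a = 1)
    (hb : b * b = 1) : SemiconjBy b (a * b) (a * b)⁻¹ := by
  rw [SemiconjBy, mul_inv_rev, inv_eq_of_mul_eq_one_right ha, inv_eq_of_mul_eq_one_right hb,
    mul_assoc]

theorem exists_zmod_equiv_zpow_smul {G α : Type*} [Group G] [MulAction G α] {a : G} {x : α}
    {n : ℕ} (hn : Nat.card α = n) (h : ∀ y, ∃ k : ℤ, a ^ k • x = y) :
    ∃ e : ZMod n ≃ α, ∀ k : ℤ, e k = a ^ k • x := by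
  have horbit : ∀ y, y ∈ MulAction.orbit (Subgroup.zpowers a) x := fun y => by
    obtain ⟨k, rfl⟩ := h y
    exact ⟨⟨a ^ k, Subgroup.zpow_mem_zpowers a k⟩, rfl⟩
  let e₀ := (MulAction.orbitZPowersEquiv a x).symm.trans (Equiv.subtypeUnivEquiv horbit)
  have hperiod : Function.minimalPeriod (a • ·) x = n := by
    rw [← hn, ← Nat.card_congr e₀, Nat.card_zmod]
  refine ⟨(ZMod.ringEquivCongr hperiod.symm).toEquiv.trans e₀, fun k => ?_⟩
  simp [e₀, MulAction.orbitZPowersEquiv_symm_apply', Subgroup.smul_def]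

section AddCommGroup

variable {G : Type*} [AddCommGroup G]

theorem addRight_mul_self_eq_one {h : G} (hh : h + h = 0) :
    Equiv.addRight h * Equiv.addRight h = 1 := by
  ext j
  simp [add_assoc, hh]

theorem commute_addRight_subLeft {h : G} (hh : h + h = 0) (c : G) :
    Commute (Equiv.addRight h) (Equiv.subLeft c) := by
  ext j
  simp only [Perm.mul_apply, coe_addRight, subLeft_apply]
  rw [← sub_sub, sub_eq_add_neg _ h, neg_eq_of_add_eq_zero_left hh]

theorem addRight_mul_subLeft_mul_inv (u c : G) :
    Equiv.addRight u * Equiv.subLeft c * (Equiv.addRight u)⁻¹ = Equiv.subLeft (c + (u + u)) := by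
  ext j
  simp only [Perm.mul_apply, Perm.inv_def, addRight_symm, coe_addRight, subLeft_apply]
  abel

theorem card_support_permCongr_subLeft_add_add {α : Type*} [Fintype α] [DecidableEq α]
    (e : G ≃ α) (c u : G) :
    #(e.permCongr (Equiv.subLeft (c + (u + u)))).support =
      #(e.permCongr (Equiv.subLeft c)).support := by
  rw [← addRight_mul_subLeft_mul_inv, ← e.permCongrHom_coe, map_mul, map_mul, map_inv,
    Perm.card_support_conj]

end AddCommGroup

theorem card_filter_permCongr_apply_eq {α β : Type*} [Fintype α] [DecidableEq α] [Fintype β]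
    [DecidableEq β] (e : α ≃ β) (p q : Perm α) :
    #{b | e.permCongr p b = e.permCongr q b} = #{a | p a = q a} :=
  (card_equiv e (by simp)).symm

theorem card_support_permCongr_subLeft_one {m : ℕ} {α : Type*} [Fintype α] [DecidableEq α]
    (e : ZMod (2 * m + 1) ≃ α) :
    #(e.permCongr (Equiv.subLeft 1)).support = #(e.permCongr (Equiv.subLeft 0)).support := by
  have h1 : (1 : ZMod (2 * m + 1)) = 0 + (((m + 1 : ℕ) : ZMod (2 * m + 1)) + (m + 1 : ℕ)) := by
    have := ZMod.natCast_self (2 * m + 1)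
    push_cast at this ⊢
    linear_combination -this
  rw [h1, card_support_permCongr_subLeft_add_add]

theorem ZMod.natCast_half_add_self (h : ℕ) : (h : ZMod (h + h)) + h = 0 := by
  exact_mod_cast ZMod.natCast_self (h + h)

theorem ZMod.add_self_ne_intCast_of_odd {h : ℕ} {k : ℤ} (hk : Odd k) (x : ZMod (h + h)) :
    x + x ≠ k := by
  intro hx
  obtain ⟨r, rfl⟩ := hk
  have h2 := congrArg (ZMod.castHom (Even.add_self h).two_dvd (ZMod 2)) hx
  push_cast at h2
  simp only [map_add, map_mul, map_one, map_ofNat, map_intCast] at h2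
  generalize ZMod.castHom _ (ZMod 2) x = y at h2
  generalize (r : ZMod 2) = s at h2
  revert y s
  decide

section ZModHalf

variable {h : ℕ} [NeZero h]

theorem ZMod.natCast_half_ne_zero : (h : ZMod (h + h)) ≠ 0 := by
  rw [Ne, ZMod.natCast_eq_zero_iff]
  intro hdvd
  have := Nat.le_of_dvd (NeZero.pos h) hdvd
  exact NeZero.ne h (by omega)

theorem ZMod.eq_zero_or_eq_half_of_add_self_eq_zero {x : ZMod (h + h)} (hx : x + x = 0) :
    x = 0 ∨ x = h := by
  rw [← ZMod.natCast_zmod_val x] at hx ⊢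
  obtain ⟨q, hq⟩ : h + h ∣ x.val + x.val := by
    rw [← ZMod.natCast_eq_zero_iff]
    exact_mod_cast hx
  have hlt := ZMod.val_lt x
  have hq2 : q < 2 := by nlinarith
  interval_cases q
  · left
    rw [show x.val = 0 by omega, Nat.cast_zero]
  · right
    rw [show x.val = h by omega]

theorem card_filter_add_eq_sub_of_add_eq_sub {c j₀ : ZMod (h + h)} (hj₀ : j₀ + h = c - j₀) :
    #{j : ZMod (h + h) | j + h = c - j} = 2 := by
  have hsol : ({j | j + h = c - j} : Finset (ZMod (h + h))) = {j₀, j₀ + h} := by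
    ext j
    simp only [mem_filter, mem_univ, true_and, mem_insert, mem_singleton]
    constructor
    · intro hj
      rcases ZMod.eq_zero_or_eq_half_of_add_self_eq_zero (x := j - j₀)
        (by linear_combination hj - hj₀) with hj | hj
      · exact Or.inl (by linear_combination hj)
      · exact Or.inr (by linear_combination hj)
    · rintro (rfl | rfl)
      · exact hj₀
      · linear_combination hj₀ + ZMod.natCast_half_add_self h
  rw [hsol, card_pair]
  simpa using ZMod.natCast_half_ne_zero

theorem card_filter_add_eq_sub_of_odd {c : ZMod (h + h)} {k : ℤ} (hk : Odd k) (hc : c - h = k) :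
    #{j : ZMod (h + h) | j + h = c - j} = 0 := by
  rw [card_eq_zero, filter_eq_empty_iff]
  intro j _ hj
  exact ZMod.add_self_ne_intCast_of_odd hk j (by linear_combination hj + hc)

theorem card_filter_add_eq_one_sub_add_card_filter_add_eq_zero_sub :
    #{j : ZMod (h + h) | j + h = 1 - j} + #{j : ZMod (h + h) | j + h = 0 - j} = 2 := by
  obtain ⟨m, rfl | rfl⟩ := Nat.even_or_odd' h
  · rw [card_filter_add_eq_sub_of_odd (k := 1 - 2 * m) ⟨-m, by ring⟩ (by push_cast; ring),
      card_filter_add_eq_sub_of_add_eq_sub (j₀ := -m) (by push_cast; ring)]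
  · rw [card_filter_add_eq_sub_of_add_eq_sub (j₀ := -m) (by push_cast; ring),
      card_filter_add_eq_sub_of_odd (k := -(2 * m + 1)) ⟨-m - 1, by ring⟩ (by push_cast; ring)]

end ZModHalf

section LinearOrder

variable {α : Type*} [LinearOrder α] [Fintype α]

def commonTranspositions (σ τ : Perm α) : Finset (α × α) :=
  {p | p.1 < p.2 ∧ τ p.1 = p.2 ∧ σ p.1 = p.2}

theorem mem_commonTranspositions {σ τ : Perm α} {a b : α} :
    (a, b) ∈ commonTranspositions σ τ ↔ a < b ∧ τ a = b ∧ σ a = b := by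
  simp [commonTranspositions]

theorem two_mul_card_commonTranspositions {σ τ : Perm α} (hσ : σ * σ = 1) (hτ : τ * τ = 1)
    (hσfix : ∀ a, σ a ≠ a) :
    2 * #(commonTranspositions σ τ) = #(univ.filter fun a => σ a = τ a) := by
  set F := commonTranspositions σ τ
  have hσσ := apply_apply_of_mul_self_eq_one hσ
  have hττ := apply_apply_of_mul_self_eq_one hτ
  have hfst : Set.InjOn Prod.fst (F : Set (α × α)) := by
    rintro ⟨a, b⟩ hab ⟨a', b'⟩ hab' (rfl : a = a')
    rw [mem_coe, mem_commonTranspositions] at hab hab'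
    rw [← hab.2.2, ← hab'.2.2]
  have hsnd : Set.InjOn Prod.snd (F : Set (α × α)) := by
    rintro ⟨a, b⟩ hab ⟨a', b'⟩ hab' (rfl : b = b')
    rw [mem_coe, mem_commonTranspositions] at hab hab'
    rw [← hσσ a, hab.2.2, ← hab'.2.2, hσσ]
  have hdisj : Disjoint (F.image Prod.fst) (F.image Prod.snd) := by
    rw [disjoint_left]
    rintro _ hfst hsnd
    obtain ⟨⟨a, b⟩, hab, rfl⟩ := mem_image.1 hfst
    obtain ⟨⟨c, _⟩, hca, rfl⟩ := mem_image.1 hsnd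
    rw [mem_commonTranspositions] at hab hca
    have hcb : c = b := by rw [← hab.2.2, ← hca.2.2, hσσ]
    exact lt_asymm hab.1 (hcb ▸ hca.1)
  have hunion : F.image Prod.fst ∪ F.image Prod.snd = univ.filter fun a => σ a = τ a := by
    ext x
    simp only [mem_union, mem_image, Prod.exists, exists_and_right, exists_eq_right,
      mem_filter, mem_univ, true_and, F, mem_commonTranspositions]
    constructor
    · rintro (⟨b, -, hτx, hσx⟩ | ⟨a, -, hτa, rfl⟩)
      · rw [hτx, hσx]
      · rw [hσσ, ← hτa, hττ]
    · intro hx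
      rcases (hσfix x).lt_or_gt with hlt | hlt
      · exact Or.inr ⟨σ x, hlt, by rw [hx, hττ], hσσ x⟩
      · exact Or.inl ⟨σ x, hlt, hx.symm, rfl⟩
  rw [← hunion, card_union_of_disjoint hdisj, card_image_of_injOn hfst,
    card_image_of_injOn hsnd, two_mul]

end LinearOrder

theorem Ssign_eq_neg_one_pow_card_commonTranspositions {N : ℕ} {σ τ : Perm (Fin N)}
    (hσ : σ * σ = 1) (hτ : τ * τ = 1) (hστ : Commute σ τ) :
    Ssign σ τ = (-1) ^ #(commonTranspositions σ τ) := by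
  set T := univ.filter (fun p : Fin N × Fin N => p.1 < p.2 ∧ τ p.1 = p.2 ∧ σ p.2 < σ p.1)
  set F := commonTranspositions σ τ
  have hσσ := apply_apply_of_mul_self_eq_one hσ
  have hττ := apply_apply_of_mul_self_eq_one hτ
  have hmem : ∀ {a b}, (a, b) ∈ T ↔ a < b ∧ τ a = b ∧ σ b < σ a := by simp [T]
  have hFT : F ⊆ T := by
    rintro ⟨a, b⟩ hab
    rw [mem_commonTranspositions] at hab
    exact hmem.2 ⟨hab.1, hab.2.1, by rw [← hab.2.2, hσσ, hab.2.2]; exact hab.1⟩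
  -- `(a, b) ↦ (σ b, σ a)` is an involution of `T` whose fixed points are exactly `F`.
  have hrest : ∏ _p ∈ T \ F, (-1 : ℤ) = 1 := by
    refine prod_involution (fun p _ => (σ p.2, σ p.1)) (fun _ _ => by norm_num) ?_ ?_
      (fun p _ => by simp [hσσ])
    · rintro ⟨a, b⟩ hab - h
      rw [Prod.mk.injEq] at h
      rw [mem_sdiff, mem_commonTranspositions, hmem] at hab
      exact hab.2 ⟨hab.1.1, hab.1.2.1, h.2⟩
    · rintro ⟨a, b⟩ hab
      rw [mem_sdiff, mem_commonTranspositions, hmem] at hab ⊢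
      obtain ⟨⟨hab, hτab, hσba⟩, hF⟩ := hab
      refine ⟨⟨hσba, ?_, by rwa [hσσ, hσσ]⟩, fun h => hF ⟨hab, hτab, ?_⟩⟩
      · rw [← Perm.mul_apply, ← hστ.eq, Perm.mul_apply, ← hτab, hττ]
      · rw [← h.2.2, hσσ]
  rw [prod_const] at hrest
  rw [Ssign, ← card_sdiff_add_card_eq_card hFT, pow_add, hrest, one_mul]

section Dihedral

variable {N : ℕ} {τ κ : Perm (Fin N)}

theorem NoCommonInvariant.symm (h : NoCommonInvariant τ κ) : NoCommonInvariant κ τ :=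
  fun H hne hH ⟨hκ, hτ⟩ => h H hne hH ⟨hτ, hκ⟩

theorem NoCommonInvariant.eq_univ (h : NoCommonInvariant τ κ) {H : Finset (Fin N)}
    (hne : H.Nonempty) (hτ : InvSet τ H) (hκ : InvSet κ H) : H = univ := by
  by_contra hH
  exact h H hne hH ⟨hτ, hκ⟩

theorem apply_zpow_mul_apply_of_apply_eq_self (hτ : τ * τ = 1) (hκ : κ * κ = 1) {x₀ : Fin N}
    (hx₀ : κ x₀ = x₀) (k : ℤ) :
    τ (((τ * κ) ^ k) x₀) = ((τ * κ) ^ (1 - k)) x₀ ∧ κ (((τ * κ) ^ k) x₀) = ((τ * κ) ^ (-k)) x₀ := by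
  have hτρ := DFunLike.congr_fun ((semiconjBy_mul_inv_left hτ hκ).zpow_right k).eq x₀
  have hκρ := DFunLike.congr_fun ((semiconjBy_mul_inv_right hτ hκ).zpow_right k).eq x₀
  simp only [Perm.mul_apply, inv_zpow'] at hτρ hκρ
  refine ⟨?_, by rw [hκρ, hx₀]⟩
  rw [hτρ, sub_eq_neg_add, zpow_add_one, Perm.mul_apply, Perm.mul_apply, hx₀]

theorem exists_zpow_mul_apply_eq (hτ : τ * τ = 1) (hκ : κ * κ = 1) (hmin : NoCommonInvariant τ κ)
    {x₀ : Fin N} (hx₀ : κ x₀ = x₀) (y : Fin N) : ∃ k : ℤ, ((τ * κ) ^ k) x₀ = y := by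
  classical
  let H : Finset (Fin N) := univ.filter fun y => ∃ k : ℤ, ((τ * κ) ^ k) x₀ = y
  have hmem : ∀ {y}, y ∈ H ↔ ∃ k : ℤ, ((τ * κ) ^ k) x₀ = y := by simp [H]
  have hH : H = univ := by
    refine hmin.eq_univ ⟨x₀, hmem.2 ⟨0, rfl⟩⟩ ?_ ?_ <;> intro _ hy <;>
      obtain ⟨k, rfl⟩ := hmem.1 hy
    · exact hmem.2 ⟨1 - k, (apply_zpow_mul_apply_of_apply_eq_self hτ hκ hx₀ k).1.symm⟩
    · exact hmem.2 ⟨-k, (apply_zpow_mul_apply_of_apply_eq_self hτ hκ hx₀ k).2.symm⟩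
  exact hmem.1 (hH ▸ mem_univ y)

theorem exists_zmod_equiv_eq_permCongr_subLeft (hτ : τ * τ = 1) (hκ : κ * κ = 1)
    (hmin : NoCommonInvariant τ κ) {x₀ : Fin N} (hx₀ : κ x₀ = x₀) :
    ∃ e : ZMod N ≃ Fin N,
      τ = e.permCongr (Equiv.subLeft 1) ∧ κ = e.permCongr (Equiv.subLeft 0) := by
  obtain ⟨e, he⟩ := exists_zmod_equiv_zpow_smul (a := τ * κ) (x := x₀) (Nat.card_fin N)
    (exists_zpow_mul_apply_eq hτ hκ hmin hx₀)
  refine ⟨e, ?_, ?_⟩ <;> ext y <;> obtain ⟨k, rfl⟩ := e.surjective y <;>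
    obtain ⟨k, rfl⟩ := ZMod.intCast_surjective k <;>
    rw [permCongr_apply, symm_apply_apply, Equiv.subLeft_apply, he, Perm.smul_def]
  · rw [(apply_zpow_mul_apply_of_apply_eq_self hτ hκ hx₀ k).1, ← Perm.smul_def, ← he]
    push_cast; rfl
  · rw [(apply_zpow_mul_apply_of_apply_eq_self hτ hκ hx₀ k).2, ← Perm.smul_def, ← he, zero_sub]
    push_cast; rfl

end Dihedral

theorem exists_Ssign_mul_Ssign_eq_neg_one_of_apply_eq_self {N : ℕ} {τ κ : Perm (Fin N)}
    (hτ : τ * τ = 1) (hκ : κ * κ = 1) (hmin : NoCommonInvariant τ κ)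
    (hlen : #τ.support ≠ #κ.support) {x₀ : Fin N} (hx₀ : κ x₀ = x₀) :
    ∃ σ : Perm (Fin N), σ * σ = 1 ∧ Commute σ τ ∧ Commute σ κ ∧
      Ssign σ τ * Ssign σ κ = -1 := by
  obtain ⟨e, rfl, rfl⟩ := exists_zmod_equiv_eq_permCongr_subLeft hτ hκ hmin hx₀
  obtain ⟨h, rfl⟩ : Even N := Nat.not_odd_iff_even.1 fun ⟨m, hm⟩ =>
    hlen (by subst hm; exact card_support_permCongr_subLeft_one e)
  have : NeZero h := ⟨fun h0 => by subst h0; exact x₀.elim0⟩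
  set σ := e.permCongr (Equiv.addRight (h : ZMod (h + h)))
  have hσ : σ * σ = 1 := by
    rw [← permCongr_mul, addRight_mul_self_eq_one (ZMod.natCast_half_add_self h)]
    exact e.permCongrHom.map_one
  have hcomm (c : ZMod (h + h)) : Commute σ (e.permCongr (Equiv.subLeft c)) := by
    simpa only [permCongrHom_coe] using
      (commute_addRight_subLeft (ZMod.natCast_half_add_self h) c).map e.permCongrHom
  have hσfix (a : Fin (h + h)) : σ a ≠ a := by
    simpa [σ, ← Equiv.eq_symm_apply] using ZMod.natCast_half_ne_zero (h := h)
  have hcard : 2 * (#(commonTranspositions σ (e.permCongr (Equiv.subLeft 1))) +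
      #(commonTranspositions σ (e.permCongr (Equiv.subLeft 0)))) = 2 := by
    rw [mul_add, two_mul_card_commonTranspositions hσ hτ hσfix,
      two_mul_card_commonTranspositions hσ hκ hσfix, card_filter_permCongr_apply_eq,
      card_filter_permCongr_apply_eq]
    exact card_filter_add_eq_one_sub_add_card_filter_add_eq_zero_sub
  refine ⟨σ, hσ, hcomm 1, hcomm 0, ?_⟩
  rw [Ssign_eq_neg_one_pow_card_commonTranspositions hσ hτ (hcomm 1),
    Ssign_eq_neg_one_pow_card_commonTranspositions hσ hκ (hcomm 0), ← pow_add,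
    show _ + _ = 1 by omega, pow_one]

/-- If τ, κ are involutions of different lengths with no common proper nonempty
invariant subset, then some involution σ commuting with both satisfies
S(σ,τ)·S(σ,κ) = −1. -/
theorem Ssign_prod_eq_neg_one {N : ℕ} (τ κ : Equiv.Perm (Fin N))
    (hτ : τ * τ = 1) (hκ : κ * κ = 1)
    (hmin : NoCommonInvariant τ κ)
    (hlen : τ.support.card ≠ κ.support.card) :
    ∃ σ : Equiv.Perm (Fin N), σ * σ = 1 ∧ Commute σ τ ∧ Commute σ κ ∧
      Ssign σ τ * Ssign σ κ = -1 := by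
  by_cases hκfix : ∃ x, κ x = x
  · obtain ⟨x₀, hx₀⟩ := hκfix
    exact exists_Ssign_mul_Ssign_eq_neg_one_of_apply_eq_self hτ hκ hmin hlen hx₀
  obtain ⟨x₀, hx₀⟩ : ∃ x, τ x = x := by
    by_contra! hτfix
    push Not at hκfix
    refine hlen ?_
    rw [eq_univ_of_forall fun x => Perm.mem_support.2 (hτfix x),
      eq_univ_of_forall fun x => Perm.mem_support.2 (hκfix x)]
  obtain ⟨σ, hσ, hστ, hσκ, hS⟩ :=
    exists_Ssign_mul_Ssign_eq_neg_one_of_apply_eq_self hκ hτ hmin.symm hlen.symm hx₀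
  exact ⟨σ, hσ, hσκ, hστ, by rw [mul_comm, hS]⟩
end

section
/- Let (τ₁,κ₁) and (τ₂,κ₂) be pairs of involutions in Σ_N such that for each pair no proper nonempty subset of {1,…,N} is invariant under both members, and such that within each pair the two involutions are products of the same number of disjoint transpositions. Then there exists σ ∈ Σ_N with στ₁σ⁻¹ = τ₂ and σκ₁σ⁻¹ = κ₂. -/
open Equiv Finset

open Sum

namespace PairsConjAux

variable {N : ℕ}

/-- projection from the doubled space. -/
def pr : Fin N ⊕ Fin N → Fin N := Sum.elim id id

/-- swap the two copies -/
def JJ : Equiv.Perm (Fin N ⊕ Fin N) := Equiv.sumComm (Fin N) (Fin N)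

/-- the doubled permutation -/
def G (τ κ : Equiv.Perm (Fin N)) : Equiv.Perm (Fin N ⊕ Fin N) :=
  (Equiv.sumCongr τ κ).trans (Equiv.sumComm (Fin N) (Fin N))

@[simp] lemma pr_inl (v : Fin N) : pr (inl v) = v := rfl
@[simp] lemma pr_inr (v : Fin N) : pr (inr v) = v := rfl
@[simp] lemma JJ_inl (v : Fin N) : JJ (inl v) = inr v := rfl
@[simp] lemma JJ_inr (v : Fin N) : JJ (inr v) = inl v := rfl
@[simp] lemma G_inl (τ κ : Equiv.Perm (Fin N)) (v : Fin N) : G τ κ (inl v) = inr (τ v) := rfl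
@[simp] lemma G_inr (τ κ : Equiv.Perm (Fin N)) (v : Fin N) : G τ κ (inr v) = inl (κ v) := rfl

section basic

variable {τ κ : Equiv.Perm (Fin N)}

lemma tau_tau (hτ : τ * τ = 1) (v : Fin N) : τ (τ v) = v := by
  have := congrArg (fun p : Equiv.Perm (Fin N) => p v) hτ
  simpa [Equiv.Perm.mul_apply] using this

lemma Ginv_inl (hκ : κ * κ = 1) (v : Fin N) : (G τ κ)⁻¹ (inl v) = inr (κ v) := by
  apply (G τ κ).injective
  simp [Equiv.apply_symm_apply, tau_tau hκ]

lemma Ginv_inr (hτ : τ * τ = 1) (v : Fin N) : (G τ κ)⁻¹ (inr v) = inl (τ v) := by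
  apply (G τ κ).injective
  simp [Equiv.apply_symm_apply, tau_tau hτ]

/-- key identity : Gᵏ (J (Gᵏ x)) = J x -/
lemma Jpow (hτ : τ * τ = 1) (hκ : κ * κ = 1) (k : ℕ) (x : Fin N ⊕ Fin N) :
    (G τ κ ^ k) (JJ ((G τ κ ^ k) x)) = JJ x := by
  induction k generalizing x with
  | zero => simp
  | succ k ih =>
      have h1 : (G τ κ ^ (k+1)) x = (G τ κ ^ k) (G τ κ x) := by
        rw [pow_succ]; simp [Equiv.Perm.mul_apply]
      rw [h1]
      have h2 : ∀ y, (G τ κ ^ (k+1)) y = G τ κ ((G τ κ ^ k) y) := by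
        intro y; rw [pow_succ']; simp [Equiv.Perm.mul_apply]
      rw [h2 (JJ ((G τ κ ^ k) (G τ κ x))), ih (G τ κ x)]
      cases x with
      | inl v => simp [tau_tau hτ]
      | inr v => simp [tau_tau hκ]

lemma orderOf_G_pos : 0 < orderOf (G τ κ) := orderOf_pos _

lemma G_pow_orderOf (k : ℕ) (x : Fin N ⊕ Fin N) :
    (G τ κ ^ (k + orderOf (G τ κ))) x = (G τ κ ^ k) x := by
  rw [pow_add, pow_orderOf_eq_one, mul_one]

/-- inverse step via + (M-1) -/
lemma G_pow_pred (k : ℕ) (x : Fin N ⊕ Fin N) :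
    (G τ κ ^ (k + orderOf (G τ κ) - 1)) x = (G τ κ)⁻¹ ((G τ κ ^ k) x) := by
  have hM : 0 < orderOf (G τ κ) := orderOf_pos _
  apply (G τ κ).injective
  rw [Equiv.Perm.coe_inv, Equiv.apply_symm_apply]
  have : G τ κ ((G τ κ ^ (k + orderOf (G τ κ) - 1)) x)
      = (G τ κ ^ (k + orderOf (G τ κ))) x := by
    have h : k + orderOf (G τ κ) - 1 + 1 = k + orderOf (G τ κ) := by omega
    rw [← h, pow_succ']
    simp [Equiv.Perm.mul_apply]
  rw [this, G_pow_orderOf]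

/-- parity of position -/
lemma isLeft_pow (k : ℕ) (a : Fin N) :
    ((G τ κ ^ k) (inl a)).isLeft = decide (Even k) := by
  induction k with
  | zero => simp
  | succ k ih =>
      have h2 : (G τ κ ^ (k+1)) (inl a) = G τ κ ((G τ κ ^ k) (inl a)) := by
        rw [pow_succ']; simp [Equiv.Perm.mul_apply]
      rw [h2]
      rcases h : (G τ κ ^ k) (inl a) with v | v <;>
        rw [h] at ih <;> simp at ih <;> simp [Nat.even_add_one, ih]

lemma eq_inl_of_isLeft {z : Fin N ⊕ Fin N} (h : z.isLeft = true) : z = inl (pr z) := by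
  cases z with
  | inl v => rfl
  | inr v => simp at h

lemma eq_inr_of_not_isLeft {z : Fin N ⊕ Fin N} (h : z.isLeft = false) : z = inr (pr z) := by
  cases z with
  | inl v => simp at h
  | inr v => rfl

lemma pr_eq_iff (y z : Fin N ⊕ Fin N) : pr y = pr z ↔ (z = y ∨ z = JJ y) := by
  cases y <;> cases z <;>
    simp [pr, JJ] <;> tauto

end basic

section main

variable {τ κ : Equiv.Perm (Fin N)}

/-- powers of a permutation agree at a point iff exponents agree mod the minimal period -/
lemma point_pow_eq {α : Type*} (g : Equiv.Perm α) (x : α) (k j : ℕ) :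
    (g ^ k) x = (g ^ j) x ↔ k ≡ j [MOD Function.minimalPeriod (⇑g) x] := by
  constructor
  · intro h
    rcases le_total j k with hle | hle
    · obtain ⟨t, rfl⟩ := Nat.exists_eq_add_of_le hle
      have h' : (⇑g)^[j] ((⇑g)^[t] x) = (⇑g)^[j] x := by
        rw [← Function.iterate_add_apply]
        simpa [← Equiv.Perm.coe_pow, Nat.add_comm] using h
      have hper : Function.IsPeriodicPt (⇑g) t x := g.injective.iterate j h'
      exact ((Nat.modEq_iff_dvd' (Nat.le_add_right _ _)).mpr
        (by simpa using hper.minimalPeriod_dvd)).symm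
    · obtain ⟨t, rfl⟩ := Nat.exists_eq_add_of_le hle
      have h' : (⇑g)^[k] ((⇑g)^[t] x) = (⇑g)^[k] x := by
        rw [← Function.iterate_add_apply]
        simpa [← Equiv.Perm.coe_pow, Nat.add_comm] using h.symm
      have hper : Function.IsPeriodicPt (⇑g) t x := g.injective.iterate k h'
      exact (Nat.modEq_iff_dvd' (Nat.le_add_right _ _)).mpr
        (by simpa using hper.minimalPeriod_dvd)
  · intro h
    have h1 : (⇑g)^[k % Function.minimalPeriod (⇑g) x] x = (⇑g)^[k] x :=
      Function.iterate_mod_minimalPeriod_eq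
    have h2 : (⇑g)^[j % Function.minimalPeriod (⇑g) x] x = (⇑g)^[j] x :=
      Function.iterate_mod_minimalPeriod_eq
    have heq : k % Function.minimalPeriod (⇑g) x = j % Function.minimalPeriod (⇑g) x := h
    simp only [← Equiv.Perm.coe_pow] at h1 h2 ⊢
    rw [← h1, ← h2, heq]

lemma step_tau (hτ : τ * τ = 1) (hκ : κ * κ = 1) (k : ℕ) (x : Fin N ⊕ Fin N) :
    ∃ j : ℕ, pr ((G τ κ ^ j) x) = τ (pr ((G τ κ ^ k) x)) := by
  rcases h : (G τ κ ^ k) x with u | u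
  · refine ⟨k + 1, ?_⟩
    have : (G τ κ ^ (k+1)) x = G τ κ ((G τ κ ^ k) x) := by
      rw [pow_succ']; simp [Equiv.Perm.mul_apply]
    rw [this, h]; simp
  · refine ⟨k + orderOf (G τ κ) - 1, ?_⟩
    rw [G_pow_pred, h, Ginv_inr hτ]; simp

lemma step_kappa (hτ : τ * τ = 1) (hκ : κ * κ = 1) (k : ℕ) (x : Fin N ⊕ Fin N) :
    ∃ j : ℕ, pr ((G τ κ ^ j) x) = κ (pr ((G τ κ ^ k) x)) := by
  rcases h : (G τ κ ^ k) x with u | u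
  · refine ⟨k + orderOf (G τ κ) - 1, ?_⟩
    rw [G_pow_pred, h, Ginv_inl hκ]; simp
  · refine ⟨k + 1, ?_⟩
    have : (G τ κ ^ (k+1)) x = G τ κ ((G τ κ ^ k) x) := by
      rw [pow_succ']; simp [Equiv.Perm.mul_apply]
    rw [this, h]; simp

/-- the projected forward orbit covers everything -/
lemma covering (hτ : τ * τ = 1) (hκ : κ * κ = 1) (hmin : NoCommonInvariant τ κ)
    (x : Fin N ⊕ Fin N) (v : Fin N) : ∃ k : ℕ, pr ((G τ κ ^ k) x) = v := by
  have hMpos : 0 < orderOf (G τ κ) := orderOf_pos _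
  let S : Finset (Fin N) :=
    (Finset.range (orderOf (G τ κ))).image (fun k => pr ((G τ κ ^ k) x))
  have hmem : ∀ k : ℕ, pr ((G τ κ ^ k) x) ∈ S := by
    intro k
    have h1 : (G τ κ ^ (k % orderOf (G τ κ))) x = (G τ κ ^ k) x := by
      rw [pow_mod_orderOf]
    rw [← h1]
    exact Finset.mem_image.mpr ⟨_, Finset.mem_range.mpr (Nat.mod_lt _ hMpos), rfl⟩
  have hne : S.Nonempty := ⟨pr ((G τ κ ^ 0) x), hmem 0⟩
  have hinv : InvSet τ S ∧ InvSet κ S := by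
    constructor
    · intro w hw
      obtain ⟨k, _, hk⟩ := Finset.mem_image.mp hw
      obtain ⟨j, hj⟩ := step_tau hτ hκ k x
      rw [hk] at hj
      rw [← hj]; exact hmem j
    · intro w hw
      obtain ⟨k, _, hk⟩ := Finset.mem_image.mp hw
      obtain ⟨j, hj⟩ := step_kappa hτ hκ k x
      rw [hk] at hj
      rw [← hj]; exact hmem j
  rcases eq_or_ne S Finset.univ with hS | hS
  · have : v ∈ S := hS ▸ Finset.mem_univ v
    obtain ⟨k, _, hk⟩ := Finset.mem_image.mp this
    exact ⟨k, hk⟩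
  · exact absurd hinv (hmin S hne hS)

/-- `J x` lies in the forward orbit of `x = inl a` -/
def Pa (τ κ : Equiv.Perm (Fin N)) (a : Fin N) : Prop :=
  ∃ k : ℕ, (G τ κ ^ k) (inl a) = inr a

lemma pow_add_apply (g : Equiv.Perm (Fin N ⊕ Fin N)) (k j : ℕ) (x : Fin N ⊕ Fin N) :
    (g ^ (k + j)) x = (g ^ k) ((g ^ j) x) := by
  rw [pow_add]; simp [Equiv.Perm.mul_apply]

lemma pow_succ_apply (g : Equiv.Perm (Fin N ⊕ Fin N)) (k : ℕ) (x : Fin N ⊕ Fin N) :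
    (g ^ (k + 1)) x = g ((g ^ k) x) := by
  rw [pow_succ']; simp [Equiv.Perm.mul_apply]

lemma Jrel_exponent (hτ : τ * τ = 1) (hκ : κ * κ = 1) {a : Fin N} {k j : ℕ}
    (h : (G τ κ ^ j) (inl a) = JJ ((G τ κ ^ k) (inl a))) :
    (G τ κ ^ (k + j)) (inl a) = inr a := by
  rw [pow_add_apply, h, Jpow hτ hκ]; rfl

lemma Pa_of_Jrel (hτ : τ * τ = 1) (hκ : κ * κ = 1) {a : Fin N} {k j : ℕ}
    (h : (G τ κ ^ j) (inl a) = JJ ((G τ κ ^ k) (inl a))) : Pa τ κ a :=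
  ⟨k + j, Jrel_exponent hτ hκ h⟩

lemma periodic_pt (x : Fin N ⊕ Fin N) :
    Function.IsPeriodicPt (⇑(G τ κ)) (orderOf (G τ κ)) x := by
  show (⇑(G τ κ))^[orderOf (G τ κ)] x = x
  rw [← Equiv.Perm.coe_pow, pow_orderOf_eq_one]
  rfl

lemma d_pos (x : Fin N ⊕ Fin N) : 0 < Function.minimalPeriod (⇑(G τ κ)) x :=
  (periodic_pt x).minimalPeriod_pos (orderOf_pos _)

lemma pow_mod_d (x : Fin N ⊕ Fin N) (k : ℕ) :
    (G τ κ ^ (k % Function.minimalPeriod (⇑(G τ κ)) x)) x = (G τ κ ^ k) x :=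
  (point_pow_eq _ _ _ _).mpr (Nat.mod_modEq _ _)

/-- under `Pa`, the forward orbit of `inl a` is everything -/
lemma coverX (hτ : τ * τ = 1) (hκ : κ * κ = 1) (hmin : NoCommonInvariant τ κ) {a : Fin N}
    (hp : Pa τ κ a) (y : Fin N ⊕ Fin N) : ∃ k : ℕ, (G τ κ ^ k) (inl a) = y := by
  obtain ⟨k₀, hk₀⟩ := covering hτ hκ hmin (inl a) (pr y)
  rcases (pr_eq_iff _ _).mp hk₀ with h | h
  · exact ⟨k₀, h.symm⟩
  · -- y = JJ ((G^k₀) (inl a)); express JJ (G^k₀ x) as a forward power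
    obtain ⟨s, hs⟩ := hp
    refine ⟨k₀ * (orderOf (G τ κ) - 1) + s, ?_⟩
    apply (G τ κ ^ k₀).injective
    have h1 : (G τ κ ^ k₀) ((G τ κ ^ (k₀ * (orderOf (G τ κ) - 1) + s)) (inl a))
        = (G τ κ ^ (k₀ + (k₀ * (orderOf (G τ κ) - 1) + s))) (inl a) :=
      (pow_add_apply _ _ _ _).symm
    obtain ⟨m, hm⟩ : ∃ m, orderOf (G τ κ) = m + 1 :=
      ⟨orderOf (G τ κ) - 1, by have := orderOf_pos (G τ κ); omega⟩
    have h2 : k₀ + (k₀ * (orderOf (G τ κ) - 1) + s) = k₀ * orderOf (G τ κ) + s := by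
      rw [hm]; simp [Nat.add_sub_cancel]; ring
    have h3 : (G τ κ ^ (k₀ * orderOf (G τ κ) + s)) (inl a) = (G τ κ ^ s) (inl a) := by
      rw [pow_add, mul_comm k₀, pow_mul, pow_orderOf_eq_one, one_pow, one_mul]
    rw [h1, h2, h3, hs, h, Jpow hτ hκ]
    rfl

/-- under `Pa` the minimal period of `inl a` is `N + N` -/
lemma d_eq_of_P (hτ : τ * τ = 1) (hκ : κ * κ = 1) (hmin : NoCommonInvariant τ κ) {a : Fin N}
    (hp : Pa τ κ a) : Function.minimalPeriod (⇑(G τ κ)) (inl a) = N + N := by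
  set d := Function.minimalPeriod (⇑(G τ κ)) (inl a) with hd
  have hdpos : 0 < d := d_pos _
  have hinj : Set.InjOn (fun k => (G τ κ ^ k) (inl a)) (Finset.range d) := by
    intro k hk j hj h
    simp only [Finset.coe_range, Set.mem_Iio] at hk hj
    have := (point_pow_eq (G τ κ) (inl a) k j).mp h
    rw [← hd] at this
    have := Nat.ModEq.eq_of_lt_of_lt this hk hj
    exact this
  have hsurj : ((Finset.range d).image (fun k => (G τ κ ^ k) (inl a))) = Finset.univ := by
    apply Finset.eq_univ_iff_forall.mpr
    intro y
    obtain ⟨k, hk⟩ := coverX hτ hκ hmin hp y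
    refine Finset.mem_image.mpr ⟨k % d, Finset.mem_range.mpr (Nat.mod_lt _ hdpos), ?_⟩
    rw [hd, pow_mod_d]; exact hk
  have h1 : d = (Finset.univ : Finset (Fin N ⊕ Fin N)).card := by
    rw [← hsurj, Finset.card_image_of_injOn hinj, Finset.card_range]
  rw [h1, Finset.card_univ, Fintype.card_sum, Fintype.card_fin]

/-- without `Pa` the minimal period of `inl a` is `N` -/
lemma d_eq_of_notP (hτ : τ * τ = 1) (hκ : κ * κ = 1) (hmin : NoCommonInvariant τ κ) {a : Fin N}
    (hnp : ¬ Pa τ κ a) : Function.minimalPeriod (⇑(G τ κ)) (inl a) = N := by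
  set d := Function.minimalPeriod (⇑(G τ κ)) (inl a) with hd
  have hdpos : 0 < d := d_pos _
  have hinj : Set.InjOn (fun k => pr ((G τ κ ^ k) (inl a))) (Finset.range d) := by
    intro k hk j hj h
    simp only [Finset.coe_range, Set.mem_Iio] at hk hj
    rcases (pr_eq_iff _ _).mp h with h' | h'
    · have := (point_pow_eq (G τ κ) (inl a) j k).mp h'
      rw [← hd] at this
      exact (Nat.ModEq.eq_of_lt_of_lt this hj hk).symm
    · exact absurd (Pa_of_Jrel hτ hκ h') hnp
  have hsurj : ((Finset.range d).image (fun k => pr ((G τ κ ^ k) (inl a)))) = Finset.univ := by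
    apply Finset.eq_univ_iff_forall.mpr
    intro v
    obtain ⟨k, hk⟩ := covering hτ hκ hmin (inl a) v
    refine Finset.mem_image.mpr ⟨k % d, Finset.mem_range.mpr (Nat.mod_lt _ hdpos), ?_⟩
    rw [hd, pow_mod_d]; exact hk
  have h1 : d = (Finset.univ : Finset (Fin N)).card := by
    rw [← hsurj, Finset.card_image_of_injOn hinj, Finset.card_range]
  rw [h1, Finset.card_univ, Fintype.card_fin]

/-- characterization of projection collisions, no-Pa case -/
lemma char_notP (hτ : τ * τ = 1) (hκ : κ * κ = 1) (hmin : NoCommonInvariant τ κ) {a : Fin N}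
    (hnp : ¬ Pa τ κ a) (k j : ℕ) :
    pr ((G τ κ ^ k) (inl a)) = pr ((G τ κ ^ j) (inl a)) ↔ k ≡ j [MOD N] := by
  have hdN := d_eq_of_notP hτ hκ hmin hnp
  constructor
  · intro h
    rcases (pr_eq_iff _ _).mp h with h' | h'
    · have := ((point_pow_eq (G τ κ) (inl a) j k).mp h').symm
      rwa [hdN] at this
    · exact absurd (Pa_of_Jrel hτ hκ h') hnp
  · intro h
    have h2 : k ≡ j [MOD Function.minimalPeriod (⇑(G τ κ)) (inl a)] := by
      rw [hdN]; exact h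
    rw [(point_pow_eq (G τ κ) (inl a) k j).mpr h2]

/-- characterization of projection collisions, Pa case with κ-fixed basepoint -/
lemma char_P (hτ : τ * τ = 1) (hκ : κ * κ = 1) (hmin : NoCommonInvariant τ κ) {a : Fin N}
    (ha : κ a = a) (k j : ℕ) :
    pr ((G τ κ ^ k) (inl a)) = pr ((G τ κ ^ j) (inl a))
      ↔ (k ≡ j [MOD N + N] ∨ (N + N) ∣ (k + j + 1)) := by
  have hM : 0 < orderOf (G τ κ) := orderOf_pos _
  have hp : Pa τ κ a := by
    refine ⟨orderOf (G τ κ) - 1, ?_⟩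
    have h1 : (G τ κ ^ (0 + orderOf (G τ κ) - 1)) (inl a)
        = (G τ κ)⁻¹ ((G τ κ ^ 0) (inl a)) := G_pow_pred 0 (inl a)
    simpa [Ginv_inl hκ, ha] using h1
  have hd := d_eq_of_P hτ hκ hmin hp
  have hJJx : (G τ κ)⁻¹ (inl a) = inr a := by rw [Ginv_inl hκ, ha]
  have key : (G τ κ ^ j) (inl a) = JJ ((G τ κ ^ k) (inl a)) ↔ (N + N) ∣ (k + j + 1) := by
    constructor
    · intro h
      have h1 := Jrel_exponent hτ hκ h
      have h2 : (G τ κ ^ (k + j + 1)) (inl a) = inl a := by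
        rw [pow_succ_apply, h1]
        show G τ κ (inr a) = inl a
        simp [ha]
      have h3 : (k + j + 1) ≡ 0 [MOD N + N] := by
        have := (point_pow_eq (G τ κ) (inl a) (k + j + 1) 0).mp (by simpa using h2)
        rwa [hd] at this
      exact (Nat.modEq_zero_iff_dvd).mp h3
    · intro h
      have h2 : (G τ κ ^ (k + j + 1)) (inl a) = inl a := by
        have : (k + j + 1) ≡ 0 [MOD N + N] := (Nat.modEq_zero_iff_dvd).mpr h
        rw [← hd] at this
        simpa using (point_pow_eq (G τ κ) (inl a) (k + j + 1) 0).mpr this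
      have h1 : (G τ κ ^ (k + j)) (inl a) = inr a := by
        apply (G τ κ).injective
        rw [← pow_succ_apply, h2]
        show inl a = G τ κ (inr a)
        simp [ha]
      -- G^k (G^j x) = inr a = JJ x = G^k (JJ (G^k x))
      apply (G τ κ ^ k).injective
      rw [← pow_add_apply, h1, Jpow hτ hκ]
      rfl
  constructor
  · intro h
    rcases (pr_eq_iff _ _).mp h with h' | h'
    · left
      have := (point_pow_eq (G τ κ) (inl a) j k).mp h'
      rw [hd] at this
      exact this.symm
    · right; exact key.mp h'
  · rintro (h | h)
    · rw [← hd] at h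
      rw [(point_pow_eq (G τ κ) (inl a) k j).mpr h]
    · rw [key.mpr h]
      rcases (G τ κ ^ k) (inl a) with u | u <;> rfl

/-- support of an involution has even cardinality -/
lemma even_support_card (hτ : τ * τ = 1) : Even τ.support.card := by
  have h2 : orderOf τ ∣ 2 := orderOf_dvd_of_pow_eq_one (by rw [pow_two]; exact hτ)
  have hall : ∀ n ∈ τ.cycleType, n = 2 := by
    intro n hn
    have h1 : n ∣ orderOf τ := by
      rw [← Equiv.Perm.lcm_cycleType]; exact Multiset.dvd_lcm hn
    have h3 : n ∣ 2 := h1.trans h2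
    have h4 := Equiv.Perm.two_le_of_mem_cycleType hn
    have h5 := Nat.le_of_dvd (by norm_num) h3
    omega
  rw [← Equiv.Perm.sum_cycleType, Multiset.eq_replicate_card.mpr hall,
    Multiset.sum_replicate, smul_eq_mul]
  exact ⟨Multiset.card τ.cycleType, by ring⟩

/-- if `J (inl a)` is not in the forward orbit then `N` is even -/
lemma notP_even (hτ : τ * τ = 1) (hκ : κ * κ = 1) (hmin : NoCommonInvariant τ κ) {a : Fin N}
    (hnp : ¬ Pa τ κ a) : Even N := by
  have hfpf : ∀ v : Fin N, τ v ≠ v := by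
    intro v hv
    obtain ⟨k, hk⟩ := covering hτ hκ hmin (inl a) v
    have key : ∀ k' : ℕ, (G τ κ ^ k') (inl a) = inl v → False := by
      intro k' hk'
      apply hnp
      apply Pa_of_Jrel hτ hκ (k := k') (j := k' + 1)
      rw [pow_succ_apply, hk']
      show G τ κ (inl v) = JJ (inl v)
      simp [hv]
    rcases h : (G τ κ ^ k) (inl a) with u | u
    · rw [h] at hk; simp at hk; subst hk
      exact key k h
    · rw [h] at hk; simp at hk; subst hk
      apply key (k + orderOf (G τ κ) - 1)
      rw [G_pow_pred, h, Ginv_inr hτ, hv]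
  have hsupp : τ.support = Finset.univ :=
    Finset.eq_univ_iff_forall.mpr fun v => Equiv.Perm.mem_support.mpr (hfpf v)
  have : τ.support.card = N := by rw [hsupp, Finset.card_univ, Fintype.card_fin]
  rw [← this]
  exact even_support_card hτ

/-- if `Pa` holds, then τ or κ has a fixed point -/
lemma P_fixed (hτ : τ * τ = 1) (hκ : κ * κ = 1) {a : Fin N} (hp : Pa τ κ a) :
    ∃ v : Fin N, τ v = v ∨ κ v = v := by
  obtain ⟨s, hs⟩ := hp
  have hodd : ¬ Even s := by
    intro he
    have h1 := isLeft_pow (τ := τ) (κ := κ) s a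
    rw [hs] at h1
    simp [he] at h1
  obtain ⟨t, ht⟩ := Nat.not_even_iff_odd.mp hodd
  -- s = 2t + 1
  have hJq : JJ ((G τ κ ^ t) (inl a)) = (G τ κ ^ (t + 1)) (inl a) := by
    apply (G τ κ ^ t).injective
    rw [Jpow hτ hκ, ← pow_add_apply]
    have : t + (t + 1) = s := by omega
    rw [this, hs]
    rfl
  rcases h : (G τ κ ^ t) (inl a) with u | u
  · refine ⟨u, Or.inl ?_⟩
    rw [h] at hJq
    rw [pow_succ_apply, h] at hJq
    simpa using hJq.symm
  · refine ⟨u, Or.inr ?_⟩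
    rw [h] at hJq
    rw [pow_succ_apply, h] at hJq
    simpa using hJq.symm

/-- fixed point transfer via equal support cardinalities -/
lemma fixed_transfer {α β : Equiv.Perm (Fin N)} (hlen : α.support.card = β.support.card)
    {v : Fin N} (hv : α v = v) : ∃ w : Fin N, β w = w := by
  by_contra hne
  push_neg at hne
  have hβ : β.support = Finset.univ :=
    Finset.eq_univ_iff_forall.mpr fun w => Equiv.Perm.mem_support.mpr (hne w)
  have hα : α.support ≠ Finset.univ := by
    intro h
    have := Finset.eq_univ_iff_forall.mp h v
    exact (Equiv.Perm.mem_support.mp this) hv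
  apply hα
  apply Finset.eq_univ_of_card
  rw [hlen, hβ]
  exact Finset.card_univ

/-- if `Pa` holds (and lengths match), `N` is odd -/
lemma P_odd (hτ : τ * τ = 1) (hκ : κ * κ = 1) (hmin : NoCommonInvariant τ κ)
    (hlen : τ.support.card = κ.support.card) {a : Fin N} (hp : Pa τ κ a) : Odd N := by
  -- produce a τ-fixed point and a κ-fixed point
  obtain ⟨u, hu⟩ := P_fixed hτ hκ hp
  have hvw : (∃ v, τ v = v) ∧ (∃ w, κ w = w) := by
    rcases hu with h | h
    · exact ⟨⟨u, h⟩, fixed_transfer hlen h⟩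
    · exact ⟨fixed_transfer hlen.symm h, ⟨u, h⟩⟩
  obtain ⟨⟨v, hv⟩, ⟨w, hw⟩⟩ := hvw
  obtain ⟨k₁, hk₁⟩ := coverX hτ hκ hmin hp (inl v)
  obtain ⟨k₂, hk₂⟩ := coverX hτ hκ hmin hp (inr w)
  have hk₁even : Even k₁ := by
    have h1 := isLeft_pow (τ := τ) (κ := κ) k₁ a
    rw [hk₁] at h1; simpa using h1.symm
  have hk₂odd : ¬ Even k₂ := by
    intro he
    have h1 := isLeft_pow (τ := τ) (κ := κ) k₂ a
    rw [hk₂] at h1; simp [he] at h1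
  -- J x = G^(2k₁+1) x and J x = G^(2k₂+1) x
  have he₁ : (G τ κ ^ (k₁ + (k₁ + 1))) (inl a) = inr a := by
    apply Jrel_exponent hτ hκ
    rw [pow_succ_apply, hk₁]
    show G τ κ (inl v) = JJ (inl v)
    simp [hv]
  have he₂ : (G τ κ ^ (k₂ + (k₂ + 1))) (inl a) = inr a := by
    apply Jrel_exponent hτ hκ
    rw [pow_succ_apply, hk₂]
    show G τ κ (inr w) = JJ (inr w)
    simp [hw]
  have hmod : (k₁ + (k₁ + 1)) ≡ (k₂ + (k₂ + 1)) [MOD N + N] := by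
    have := (point_pow_eq (G τ κ) (inl a) (k₁ + (k₁ + 1)) (k₂ + (k₂ + 1))).mp
      (by rw [he₁, he₂])
    rwa [d_eq_of_P hτ hκ hmin hp] at this
  have hdvd : ((N + N : ℕ) : ℤ) ∣ ((k₂ + (k₂ + 1) : ℕ) : ℤ) - ((k₁ + (k₁ + 1) : ℕ) : ℤ) :=
    hmod.dvd
  obtain ⟨c, hc⟩ := hdvd
  have hNdvd : (k₂ : ℤ) - (k₁ : ℤ) = (N : ℤ) * c := by push_cast at hc ⊢; linarith
  rcases Nat.even_or_odd N with hN | hN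
  · exfalso
    have heven : Even ((N : ℤ) * c) := by
      rcases hN with ⟨m, hm⟩
      exact ⟨m * c, by rw [hm]; push_cast; ring⟩
    rw [← hNdvd] at heven
    obtain ⟨b₁, hb₁⟩ := hk₁even
    obtain ⟨b₂, hb₂⟩ := Nat.not_even_iff_odd.mp hk₂odd
    rcases heven with ⟨z, hz⟩
    omega
  · exact hN

lemma pow_pred_apply (g : Equiv.Perm (Fin N ⊕ Fin N)) {e : ℕ} (he : g ^ e = 1) (hpos : 0 < e)
    (k : ℕ) (x : Fin N ⊕ Fin N) : (g ^ (k + e - 1)) x = g⁻¹ ((g ^ k) x) := by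
  apply g.injective
  rw [Equiv.Perm.coe_inv, Equiv.apply_symm_apply]
  have h1 : g ((g ^ (k + e - 1)) x) = (g ^ (k + e)) x := by
    have h : k + e - 1 + 1 = k + e := by omega
    rw [← pow_succ_apply, h]
  rw [h1, pow_add, he, mul_one]

end main

/-- the abstract construction of the conjugator -/
lemma build (τ₁ κ₁ τ₂ κ₂ : Equiv.Perm (Fin N))
    (hτ₁ : τ₁ * τ₁ = 1) (hκ₁ : κ₁ * κ₁ = 1) (hτ₂ : τ₂ * τ₂ = 1) (hκ₂ : κ₂ * κ₂ = 1)
    (a₁ a₂ : Fin N) (R : ℕ → ℕ → Prop)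
    (h₁ : ∀ k j, pr ((G τ₁ κ₁ ^ k) (inl a₁)) = pr ((G τ₁ κ₁ ^ j) (inl a₁)) ↔ R k j)
    (h₂ : ∀ k j, pr ((G τ₂ κ₂ ^ k) (inl a₂)) = pr ((G τ₂ κ₂ ^ j) (inl a₂)) ↔ R k j)
    (cov₁ : ∀ v : Fin N, ∃ k : ℕ, pr ((G τ₁ κ₁ ^ k) (inl a₁)) = v) :
    ∃ σ : Equiv.Perm (Fin N), σ * τ₁ * σ⁻¹ = τ₂ ∧ σ * κ₁ * σ⁻¹ = κ₂ := by
  classical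
  choose ch hch using cov₁
  set f : Fin N → Fin N := fun v => pr ((G τ₂ κ₂ ^ (ch v)) (inl a₂)) with hf
  have transfer : ∀ k j, pr ((G τ₁ κ₁ ^ k) (inl a₁)) = pr ((G τ₁ κ₁ ^ j) (inl a₁)) ↔
      pr ((G τ₂ κ₂ ^ k) (inl a₂)) = pr ((G τ₂ κ₂ ^ j) (inl a₂)) :=
    fun k j => (h₁ k j).trans (h₂ k j).symm
  have finj : Function.Injective f := by
    intro v w h
    have := (transfer (ch v) (ch w)).mpr h
    rw [hch v, hch w] at this
    exact this
  -- common exponent killing both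
  set E : ℕ := orderOf (G τ₁ κ₁) * orderOf (G τ₂ κ₂) with hE
  have hEpos : 0 < E := Nat.mul_pos (orderOf_pos _) (orderOf_pos _)
  have hE₁ : (G τ₁ κ₁) ^ E = 1 := by rw [hE, pow_mul, pow_orderOf_eq_one, one_pow]
  have hE₂ : (G τ₂ κ₂) ^ E = 1 := by
    rw [hE, mul_comm, pow_mul, pow_orderOf_eq_one, one_pow]
  have equiv_τ : ∀ v : Fin N, f (τ₁ v) = τ₂ (f v) := by
    intro v
    by_cases hk : Even (ch v)
    · have hx1 : (G τ₁ κ₁ ^ (ch v)) (inl a₁) = inl v := by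
        have h1 := eq_inl_of_isLeft (z := (G τ₁ κ₁ ^ (ch v)) (inl a₁))
          (by rw [isLeft_pow]; simp [hk])
        rw [hch v] at h1
        exact h1
      have hx2 : (G τ₂ κ₂ ^ (ch v)) (inl a₂) = inl (f v) := by
        exact eq_inl_of_isLeft (by rw [isLeft_pow]; simp [hk])
      have e1 : pr ((G τ₁ κ₁ ^ (ch v + 1)) (inl a₁)) = τ₁ v := by
        rw [pow_succ_apply, hx1]; simp
      have e2 : pr ((G τ₂ κ₂ ^ (ch v + 1)) (inl a₂)) = τ₂ (f v) := by
        rw [pow_succ_apply, hx2]; simp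
      have h3 : pr ((G τ₁ κ₁ ^ (ch (τ₁ v))) (inl a₁))
          = pr ((G τ₁ κ₁ ^ (ch v + 1)) (inl a₁)) := by rw [hch (τ₁ v), e1]
      have h4 := (transfer _ _).mp h3
      rw [e2] at h4
      exact h4
    · have hx1 : (G τ₁ κ₁ ^ (ch v)) (inl a₁) = inr v := by
        have h1 := eq_inr_of_not_isLeft (z := (G τ₁ κ₁ ^ (ch v)) (inl a₁))
          (by rw [isLeft_pow]; simp [hk])
        rw [hch v] at h1
        exact h1
      have hx2 : (G τ₂ κ₂ ^ (ch v)) (inl a₂) = inr (f v) := by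
        exact eq_inr_of_not_isLeft (by rw [isLeft_pow]; simp [hk])
      have e1 : pr ((G τ₁ κ₁ ^ (ch v + E - 1)) (inl a₁)) = τ₁ v := by
        rw [pow_pred_apply _ hE₁ hEpos, hx1, Ginv_inr hτ₁]; simp
      have e2 : pr ((G τ₂ κ₂ ^ (ch v + E - 1)) (inl a₂)) = τ₂ (f v) := by
        rw [pow_pred_apply _ hE₂ hEpos, hx2, Ginv_inr hτ₂]; simp
      have h3 : pr ((G τ₁ κ₁ ^ (ch (τ₁ v))) (inl a₁))
          = pr ((G τ₁ κ₁ ^ (ch v + E - 1)) (inl a₁)) := by rw [hch (τ₁ v), e1]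
      have h4 := (transfer _ _).mp h3
      rw [e2] at h4
      exact h4
  have equiv_κ : ∀ v : Fin N, f (κ₁ v) = κ₂ (f v) := by
    intro v
    by_cases hk : Even (ch v)
    · have hx1 : (G τ₁ κ₁ ^ (ch v)) (inl a₁) = inl v := by
        have h1 := eq_inl_of_isLeft (z := (G τ₁ κ₁ ^ (ch v)) (inl a₁))
          (by rw [isLeft_pow]; simp [hk])
        rw [hch v] at h1
        exact h1
      have hx2 : (G τ₂ κ₂ ^ (ch v)) (inl a₂) = inl (f v) := by
        exact eq_inl_of_isLeft (by rw [isLeft_pow]; simp [hk])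
      have e1 : pr ((G τ₁ κ₁ ^ (ch v + E - 1)) (inl a₁)) = κ₁ v := by
        rw [pow_pred_apply _ hE₁ hEpos, hx1, Ginv_inl hκ₁]; simp
      have e2 : pr ((G τ₂ κ₂ ^ (ch v + E - 1)) (inl a₂)) = κ₂ (f v) := by
        rw [pow_pred_apply _ hE₂ hEpos, hx2, Ginv_inl hκ₂]; simp
      have h3 : pr ((G τ₁ κ₁ ^ (ch (κ₁ v))) (inl a₁))
          = pr ((G τ₁ κ₁ ^ (ch v + E - 1)) (inl a₁)) := by rw [hch (κ₁ v), e1]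
      have h4 := (transfer _ _).mp h3
      rw [e2] at h4
      exact h4
    · have hx1 : (G τ₁ κ₁ ^ (ch v)) (inl a₁) = inr v := by
        have h1 := eq_inr_of_not_isLeft (z := (G τ₁ κ₁ ^ (ch v)) (inl a₁))
          (by rw [isLeft_pow]; simp [hk])
        rw [hch v] at h1
        exact h1
      have hx2 : (G τ₂ κ₂ ^ (ch v)) (inl a₂) = inr (f v) := by
        exact eq_inr_of_not_isLeft (by rw [isLeft_pow]; simp [hk])
      have e1 : pr ((G τ₁ κ₁ ^ (ch v + 1)) (inl a₁)) = κ₁ v := by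
        rw [pow_succ_apply, hx1]; simp
      have e2 : pr ((G τ₂ κ₂ ^ (ch v + 1)) (inl a₂)) = κ₂ (f v) := by
        rw [pow_succ_apply, hx2]; simp
      have h3 : pr ((G τ₁ κ₁ ^ (ch (κ₁ v))) (inl a₁))
          = pr ((G τ₁ κ₁ ^ (ch v + 1)) (inl a₁)) := by rw [hch (κ₁ v), e1]
      have h4 := (transfer _ _).mp h3
      rw [e2] at h4
      exact h4
  refine ⟨Equiv.ofBijective f (Finite.injective_iff_bijective.mp finj), ?_, ?_⟩
  · ext u
    simp only [Equiv.Perm.mul_apply]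
    set σ := Equiv.ofBijective f (Finite.injective_iff_bijective.mp finj) with hσ
    have h5 : σ (τ₁ (σ⁻¹ u)) = τ₂ (σ (σ⁻¹ u)) := equiv_τ (σ⁻¹ u)
    rw [Equiv.Perm.coe_inv, Equiv.apply_symm_apply] at h5
    simp [h5]
  · ext u
    simp only [Equiv.Perm.mul_apply]
    set σ := Equiv.ofBijective f (Finite.injective_iff_bijective.mp finj) with hσ
    have h5 : σ (κ₁ (σ⁻¹ u)) = κ₂ (σ (σ⁻¹ u)) := equiv_κ (σ⁻¹ u)
    rw [Equiv.Perm.coe_inv, Equiv.apply_symm_apply] at h5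
    simp [h5]


end PairsConjAux

/-- Two pairs of equal-length involutions, each pair having no common proper
nonempty invariant subset, are simultaneously conjugate. -/
theorem pairs_conjugate {N : ℕ} (τ₁ κ₁ τ₂ κ₂ : Equiv.Perm (Fin N))
    (hτ₁ : τ₁ * τ₁ = 1) (hκ₁ : κ₁ * κ₁ = 1)
    (hτ₂ : τ₂ * τ₂ = 1) (hκ₂ : κ₂ * κ₂ = 1)
    (hmin₁ : NoCommonInvariant τ₁ κ₁) (hmin₂ : NoCommonInvariant τ₂ κ₂)
    (hlen₁ : τ₁.support.card = κ₁.support.card)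
    (hlen₂ : τ₂.support.card = κ₂.support.card) :
    ∃ σ : Equiv.Perm (Fin N), σ * τ₁ * σ⁻¹ = τ₂ ∧ σ * κ₁ * σ⁻¹ = κ₂ := by
  open PairsConjAux Sum in
  rcases Nat.eq_zero_or_pos N with hN | hN
  · subst hN
    exact ⟨1, by ext x; exact x.elim0, by ext x; exact x.elim0⟩
  · set a₀ : Fin N := ⟨0, hN⟩ with ha₀
    rcases Nat.even_or_odd N with hNe | hNo
    · -- even case : no Pa for either pair
      have hnp₁ : ¬ PairsConjAux.Pa τ₁ κ₁ a₀ := fun hp =>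
        (Nat.not_odd_iff_even.mpr hNe) (PairsConjAux.P_odd hτ₁ hκ₁ hmin₁ hlen₁ hp)
      have hnp₂ : ¬ PairsConjAux.Pa τ₂ κ₂ a₀ := fun hp =>
        (Nat.not_odd_iff_even.mpr hNe) (PairsConjAux.P_odd hτ₂ hκ₂ hmin₂ hlen₂ hp)
      exact PairsConjAux.build τ₁ κ₁ τ₂ κ₂ hτ₁ hκ₁ hτ₂ hκ₂ a₀ a₀
        (fun k j => k ≡ j [MOD N])
        (PairsConjAux.char_notP hτ₁ hκ₁ hmin₁ hnp₁)
        (PairsConjAux.char_notP hτ₂ hκ₂ hmin₂ hnp₂)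
        (PairsConjAux.covering hτ₁ hκ₁ hmin₁ (inl a₀))
    · -- odd case : Pa holds, get κ-fixed basepoints
      have hp₁ : PairsConjAux.Pa τ₁ κ₁ a₀ := by
        by_contra hnp
        exact (Nat.not_odd_iff_even.mpr (PairsConjAux.notP_even hτ₁ hκ₁ hmin₁ hnp)) hNo
      have hp₂ : PairsConjAux.Pa τ₂ κ₂ a₀ := by
        by_contra hnp
        exact (Nat.not_odd_iff_even.mpr (PairsConjAux.notP_even hτ₂ hκ₂ hmin₂ hnp)) hNo
      have hb₁ : ∃ b : Fin N, κ₁ b = b := by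
        obtain ⟨u, hu⟩ := PairsConjAux.P_fixed hτ₁ hκ₁ hp₁
        rcases hu with h | h
        · exact PairsConjAux.fixed_transfer hlen₁ h
        · exact ⟨u, h⟩
      have hb₂ : ∃ b : Fin N, κ₂ b = b := by
        obtain ⟨u, hu⟩ := PairsConjAux.P_fixed hτ₂ hκ₂ hp₂
        rcases hu with h | h
        · exact PairsConjAux.fixed_transfer hlen₂ h
        · exact ⟨u, h⟩
      obtain ⟨b₁, hb₁⟩ := hb₁
      obtain ⟨b₂, hb₂⟩ := hb₂
      exact PairsConjAux.build τ₁ κ₁ τ₂ κ₂ hτ₁ hκ₁ hτ₂ hκ₂ b₁ b₂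
        (fun k j => (k ≡ j [MOD N + N] ∨ (N + N) ∣ (k + j + 1)))
        (PairsConjAux.char_P hτ₁ hκ₁ hmin₁ hb₁)
        (PairsConjAux.char_P hτ₂ hκ₂ hmin₂ hb₂)
        (PairsConjAux.covering hτ₁ hκ₁ hmin₁ (inl b₁))
end
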